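/- arXiv:1903.08059 — 9 statements merged into one kernel-verified Lean document; each statement's English description precedes it below -/
import Mathlib

section
/- For any finite simple graph G on n vertices and any integer s ≥ 2, (s² − 1)·k_{s+1}(G)·k_{s−1}(G) ≥ k_s(G)·(s²·k_s(G) − n·k_{s−1}(G)). Equivalently, when k_s(G) and k_{s−1}(G) are positive, k_{s+1}(G)/k_s(G) ≥ (1/(s²−1))·(s²·k_s(G)/k_{s−1}(G) − n). -/
/-!
Write `c(T)` for the number of common neighbours of a vertex set `T`. Adding a common neighbour
`u` to a `t`-clique `T` is a bijection onto the pairs `(S, u)` with `S` a `(t+1)`-clique and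
`u ∈ S`; hence `∑ c(T) = (t+1) k_{t+1}` and `∑ c(T)² = ∑_S ∑_{u ∈ S} c(S - u)`. For a clique `S`,
the vertices of `S`, the common neighbours of `S` and, for each `u ∈ S`, the vertices adjacent to
all of `S - u` but not to `u` form disjoint sets, so `∑_{u ∈ S} c(S - u) ≤ n + (|S| - 1) c(S)`.
Cauchy–Schwarz, `(∑ c(T))² ≤ k_t ∑ c(T)²`, gives the inequality for `s = t + 1`.
-/

open Finset

namespace SimpleGraph

variable {V : Type*} [Fintype V] (G : SimpleGraph V) [DecidableRel G.Adj]

def commonNeighborFinset (T : Finset V) : Finset V :=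
  {v | ∀ u ∈ T, G.Adj v u}

variable {G}

@[simp]
lemma mem_commonNeighborFinset {T : Finset V} {v : V} :
    v ∈ G.commonNeighborFinset T ↔ ∀ u ∈ T, G.Adj v u := by
  simp [commonNeighborFinset]

lemma notMem_of_mem_commonNeighborFinset {T : Finset V} {v : V}
    (hv : v ∈ G.commonNeighborFinset T) : v ∉ T :=
  fun hvT => G.loopless.irrefl v (mem_commonNeighborFinset.1 hv v hvT)

lemma commonNeighborFinset_anti {T T' : Finset V} (h : T' ⊆ T) :
    G.commonNeighborFinset T ⊆ G.commonNeighborFinset T' := by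
  intro v hv
  simp only [mem_commonNeighborFinset] at hv ⊢
  exact fun u hu => hv u (h hu)

variable [DecidableEq V]

lemma mem_commonNeighborFinset_erase {S : Finset V} (hS : G.IsClique (S : Set V)) {v : V}
    (hv : v ∈ S) : v ∈ G.commonNeighborFinset (S.erase v) := by
  simp only [mem_commonNeighborFinset, mem_erase]
  exact fun u hu => hS hv hu.2 (Ne.symm hu.1)

lemma card_commonNeighborFinset_erase {S : Finset V} (hS : G.IsClique (S : Set V)) {u : V}
    (hu : u ∈ S) :
    #(G.commonNeighborFinset (S.erase u))
      = #(G.commonNeighborFinset (S.erase u) \ insert u (G.commonNeighborFinset S))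
        + #(G.commonNeighborFinset S) + 1 := by
  have hsub : insert u (G.commonNeighborFinset S) ⊆ G.commonNeighborFinset (S.erase u) :=
    insert_subset (mem_commonNeighborFinset_erase hS hu)
      (commonNeighborFinset_anti (erase_subset u S))
  rw [← card_sdiff_add_card_eq_card hsub,
    card_insert_of_notMem fun h => notMem_of_mem_commonNeighborFinset h hu, add_assoc]

lemma not_adj_of_mem_commonNeighborFinset_erase_sdiff {S : Finset V} {u w : V}
    (hw : w ∈ G.commonNeighborFinset (S.erase u) \ insert u (G.commonNeighborFinset S)) :
    ¬G.Adj w u := by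
  simp only [mem_sdiff, mem_insert, not_or, mem_commonNeighborFinset, mem_erase] at hw
  obtain ⟨hwS, -, hwN⟩ := hw
  exact fun hwu => hwN fun x hx => (eq_or_ne x u).elim (· ▸ hwu) (hwS x ⟨·, hx⟩)

lemma card_add_card_add_sum_card_le (S : Finset V) :
    #S + #(G.commonNeighborFinset S)
      + ∑ u ∈ S, #(G.commonNeighborFinset (S.erase u) \ insert u (G.commonNeighborFinset S))
      ≤ Fintype.card V := by
  set A := fun u => G.commonNeighborFinset (S.erase u) \ insert u (G.commonNeighborFinset S)
  have hA : (S : Set V).PairwiseDisjoint A := by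
    intro u _ u' hu' huu'
    refine Finset.disjoint_left.2 fun w hw hw' => ?_
    exact not_adj_of_mem_commonNeighborFinset_erase_sdiff hw'
      (mem_commonNeighborFinset.1 (mem_sdiff.1 hw).1 u' (mem_erase.2 ⟨huu'.symm, hu'⟩))
  have hS_N : Disjoint S (G.commonNeighborFinset S) :=
    Finset.disjoint_right.2 fun _ => notMem_of_mem_commonNeighborFinset
  have hSN_A : Disjoint (S ∪ G.commonNeighborFinset S) (S.biUnion A) := by
    refine Finset.disjoint_right.2 fun w hw => ?_
    obtain ⟨u, -, hw⟩ := mem_biUnion.1 hw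
    simp only [A, mem_sdiff, mem_insert, not_or] at hw
    rw [mem_union, not_or]
    exact ⟨fun hwS => notMem_of_mem_commonNeighborFinset hw.1 (mem_erase.2 ⟨hw.2.1, hwS⟩),
      hw.2.2⟩
  rw [← card_biUnion hA, ← card_union_of_disjoint hS_N, ← card_union_of_disjoint hSN_A]
  exact card_le_univ _

lemma sum_card_commonNeighborFinset_erase_add_le {S : Finset V} (hS : G.IsClique (S : Set V)) :
    ∑ u ∈ S, #(G.commonNeighborFinset (S.erase u)) + #(G.commonNeighborFinset S)
      ≤ Fintype.card V + #S * #(G.commonNeighborFinset S) := by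
  rw [sum_congr rfl fun u hu => card_commonNeighborFinset_erase hS hu, sum_add_distrib,
    sum_add_distrib, sum_const, sum_const, smul_eq_mul, smul_eq_mul, mul_one]
  linarith [card_add_card_add_sum_card_le (G := G) S]

theorem sum_sum_commonNeighborFinset_insert {M : Type*} [AddCommMonoid M] (t : ℕ)
    (f : Finset V → V → M) :
    ∑ T ∈ G.cliqueFinset t, ∑ u ∈ G.commonNeighborFinset T, f (insert u T) u
      = ∑ S ∈ G.cliqueFinset (t + 1), ∑ u ∈ S, f S u := by
  rw [sum_sigma', sum_sigma']
  refine sum_bij' (fun p _ => ⟨insert p.2 p.1, p.2⟩) (fun p _ => ⟨p.1.erase p.2, p.2⟩)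
    ?_ ?_ ?_ ?_ (fun _ _ => rfl)
  · rintro ⟨T, u⟩ hp
    simp only [mem_sigma, mem_cliqueFinset_iff] at hp ⊢
    exact ⟨hp.1.insert (mem_commonNeighborFinset.1 hp.2), mem_insert_self _ _⟩
  · rintro ⟨S, u⟩ hp
    simp only [mem_sigma, mem_cliqueFinset_iff] at hp ⊢
    exact ⟨hp.1.erase_of_mem hp.2, mem_commonNeighborFinset_erase hp.1.isClique hp.2⟩
  · rintro ⟨T, u⟩ hp
    simp [erase_insert (notMem_of_mem_commonNeighborFinset (mem_sigma.1 hp).2)]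
  · rintro ⟨S, u⟩ hp
    simp [insert_erase (mem_sigma.1 hp).2]

lemma sum_card_commonNeighborFinset (t : ℕ) :
    ∑ T ∈ G.cliqueFinset t, #(G.commonNeighborFinset T) = (t + 1) * #(G.cliqueFinset (t + 1)) := by
  have h := sum_sum_commonNeighborFinset_insert (G := G) t fun _ _ => 1
  simp only [← card_eq_sum_ones] at h
  rw [h, sum_congr rfl fun S hS => (mem_cliqueFinset_iff.1 hS).card_eq, sum_const, smul_eq_mul,
    mul_comm]

lemma sum_card_commonNeighborFinset_sq_le (t : ℕ) :
    ∑ T ∈ G.cliqueFinset t, #(G.commonNeighborFinset T) ^ 2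
      ≤ Fintype.card V * #(G.cliqueFinset (t + 1)) + t * (t + 2) * #(G.cliqueFinset (t + 2)) := by
  have hsq : ∑ T ∈ G.cliqueFinset t, #(G.commonNeighborFinset T) ^ 2
      = ∑ S ∈ G.cliqueFinset (t + 1), ∑ u ∈ S, #(G.commonNeighborFinset (S.erase u)) := by
    rw [← sum_sum_commonNeighborFinset_insert]
    refine sum_congr rfl fun T _ => ?_
    rw [sq, ← smul_eq_mul, ← sum_const]
    refine sum_congr rfl fun u hu => ?_
    rw [erase_insert (notMem_of_mem_commonNeighborFinset hu)]
  have hle : ∑ S ∈ G.cliqueFinset (t + 1),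
        (∑ u ∈ S, #(G.commonNeighborFinset (S.erase u)) + #(G.commonNeighborFinset S))
      ≤ ∑ S ∈ G.cliqueFinset (t + 1), (Fintype.card V + (t + 1) * #(G.commonNeighborFinset S)) :=
    sum_le_sum fun S hS => by
      have hS := mem_cliqueFinset_iff.1 hS
      simpa only [hS.card_eq] using sum_card_commonNeighborFinset_erase_add_le hS.isClique
  rw [sum_add_distrib, sum_add_distrib, ← mul_sum, sum_const, smul_eq_mul,
    sum_card_commonNeighborFinset, ← hsq] at hle
  linarith

theorem sq_mul_card_cliqueFinset_le (t : ℕ) :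
    ((t + 1) * #(G.cliqueFinset (t + 1))) ^ 2
      ≤ #(G.cliqueFinset t) * (Fintype.card V * #(G.cliqueFinset (t + 1))
        + t * (t + 2) * #(G.cliqueFinset (t + 2))) :=
  calc ((t + 1) * #(G.cliqueFinset (t + 1))) ^ 2
      = (∑ T ∈ G.cliqueFinset t, #(G.commonNeighborFinset T)) ^ 2 := by
        rw [sum_card_commonNeighborFinset]
    _ ≤ #(G.cliqueFinset t) * ∑ T ∈ G.cliqueFinset t, #(G.commonNeighborFinset T) ^ 2 :=
        sq_sum_le_card_mul_sum_sq
    _ ≤ _ := Nat.mul_le_mul_left _ (sum_card_commonNeighborFinset_sq_le t)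

end SimpleGraph

open SimpleGraph

/-- The Moon–Moser inequality. -/
theorem moon_moser (n : ℕ) (G : SimpleGraph (Fin n)) [DecidableRel G.Adj]
    (s : ℕ) (hs : 2 ≤ s) :
    ((G.cliqueFinset s).card : ℝ) *
        ((s : ℝ) ^ 2 * ((G.cliqueFinset s).card : ℝ)
          - (n : ℝ) * ((G.cliqueFinset (s - 1)).card : ℝ))
      ≤ ((s : ℝ) ^ 2 - 1) * ((G.cliqueFinset (s + 1)).card : ℝ)
          * ((G.cliqueFinset (s - 1)).card : ℝ) := by
  obtain ⟨t, rfl⟩ : ∃ t, s = t + 1 := ⟨s - 1, by omega⟩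
  have h := G.sq_mul_card_cliqueFinset_le t
  rw [Fintype.card_fin] at h
  rw [Nat.add_sub_cancel]
  have hR := (Nat.cast_le (α := ℝ)).2 h
  push_cast at hR ⊢
  linear_combination hR
end

section
/- Let r, t, n be integers with 1 ≤ r ≤ n and t ≥ 1. If G is a graph on n vertices with maximum degree at most r (equivalently, G contains no copy of the star S_{r+1} = K_{1,r+1}), then k_t(G) ≤ (n/t)·C(r, t−1) = (n/(r+1))·C(r+1, t). -/
/-!
Removing `v` from a `t`-clique through `v` leaves a `(t-1)`-subset of the neighbourhood of `v`,
so at most `C(r, t-1)` of the `t`-cliques contain any given vertex. Double counting the pairs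
(vertex, `t`-clique containing it) gives `t · k_t(G) ≤ n · C(r, t-1)`. The second form of the
bound is the identity `(r+1) · C(r, t-1) = t · C(r+1, t)`.
-/

open Finset

namespace SimpleGraph

variable {V : Type*} [DecidableEq V] (G : SimpleGraph V) [Fintype V] [DecidableRel G.Adj]

theorem card_cliqueFinset_filter_mem_le (t : ℕ) (v : V) :
    #{s ∈ G.cliqueFinset t | v ∈ s} ≤ (G.degree v).choose (t - 1) := by
  rw [← card_neighborFinset_eq_degree, ← card_powersetCard]
  refine card_le_card_of_injOn (fun s => s.erase v) (fun s hs => ?_) (fun s₁ h₁ s₂ h₂ h => ?_)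
  · obtain ⟨hs, hv⟩ := mem_filter.mp hs
    obtain ⟨hclique, hcard⟩ := mem_cliqueFinset_iff.mp hs
    refine mem_powersetCard.mpr ⟨fun u hu => ?_, by rw [card_erase_of_mem hv, hcard]⟩
    exact (mem_neighborFinset _ _ _).mpr
      (hclique hv (mem_of_mem_erase hu) (ne_of_mem_erase hu).symm)
  · have h₁ := (mem_filter.mp h₁).2
    have h₂ := (mem_filter.mp h₂).2
    simpa only [insert_erase h₁, insert_erase h₂] using congrArg (insert v) h

theorem card_cliqueFinset_mul_le {r : ℕ} (hdeg : ∀ v, G.degree v ≤ r) (t : ℕ) :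
    #(G.cliqueFinset t) * t ≤ Fintype.card V * r.choose (t - 1) :=
  calc #(G.cliqueFinset t) * t = ∑ s ∈ G.cliqueFinset t, #s := by
        rw [sum_congr rfl fun s hs => (mem_cliqueFinset_iff.mp hs).2, sum_const, smul_eq_mul]
    _ ≤ Fintype.card V * r.choose (t - 1) := sum_card_le fun v =>
        (G.card_cliqueFinset_filter_mem_le t v).trans (Nat.choose_le_choose _ (hdeg v))

end SimpleGraph

theorem div_mul_choose_sub_one_eq (x : ℝ) (r : ℕ) {t : ℕ} (ht : 1 ≤ t) :
    x / t * r.choose (t - 1) = x / (r + 1) * (r + 1).choose t := by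
  obtain ⟨k, rfl⟩ := Nat.exists_eq_add_of_le' ht
  have hid : ((r + 1 : ℕ) : ℝ) * r.choose k = (r + 1).choose (k + 1) * (k + 1 : ℕ) := by
    exact_mod_cast Nat.add_one_mul_choose_eq r k
  push_cast at hid
  rw [Nat.add_sub_cancel, Nat.cast_add_one]
  field_simp
  linear_combination x * hid

theorem wood_engbers_galvin_general (r t n : ℕ) (ht : 1 ≤ t)
    (G : SimpleGraph (Fin n)) [DecidableRel G.Adj]
    (hdeg : ∀ v, G.degree v ≤ r) :
    ((G.cliqueFinset t).card : ℝ) ≤ ((n : ℝ) / t) * (r.choose (t - 1) : ℝ) ∧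
      ((n : ℝ) / t) * (r.choose (t - 1) : ℝ)
        = ((n : ℝ) / (r + 1)) * ((r + 1).choose t : ℝ) := by
  have hcount : (#(G.cliqueFinset t) * t : ℝ) ≤ n * r.choose (t - 1) := by
    exact_mod_cast Fintype.card_fin n ▸ G.card_cliqueFinset_mul_le hdeg t
  have ht0 : (0 : ℝ) < t := by exact_mod_cast ht
  refine ⟨?_, div_mul_choose_sub_one_eq n r ht⟩
  rwa [div_mul_eq_mul_div, le_div_iff₀ ht0]

/-- The theorem of Wood and of Engbers–Galvin: an `S_{r+1}`-free graph
(max degree at most `r`) on `n` vertices has at most `(n/t)·C(r,t-1)`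
copies of `K_t`, and `(n/t)·C(r,t-1) = (n/(r+1))·C(r+1,t)`. -/
theorem wood_engbers_galvin (r t n : ℕ) (hr : 1 ≤ r) (hrn : r ≤ n) (ht : 1 ≤ t)
    (G : SimpleGraph (Fin n)) [DecidableRel G.Adj]
    (hdeg : ∀ v, G.degree v ≤ r) :
    ((G.cliqueFinset t).card : ℝ) ≤ ((n : ℝ) / t) * (r.choose (t - 1) : ℝ) ∧
      ((n : ℝ) / t) * (r.choose (t - 1) : ℝ)
        = ((n : ℝ) / (r + 1)) * ((r + 1).choose t : ℝ) :=
  wood_engbers_galvin_general r t n ht G hdeg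
end

section
/- Let r and t be integers with 2 ≤ t ≤ r. For every ε > 0 there exists δ > 0 (depending only on ε, r, t) such that for every n, if G is a graph on n vertices with k_t(G) ≥ (1 + ε)·(n/(r+1))·C(r+1, t), then s_{r+1}(G) ≥ δ·n. -/
/-!
A `t`-clique through `v` is `v` together with a `(t-1)`-subset of the neighbourhood of `v`, so
double counting gives `t k_t(G) ≤ ∑_v C(d(v), t-1)`. A vertex of degree `d ≤ r` contributes at
most `C(r, t-1)`, and one of degree `d > r` contributes `C(d, t-1) ≤ C(r+1, t-1) C(d, r+1)`.
Since `(r+1) C(r, t-1) = t C(r+1, t)`, the hypothesis reads `t k_t(G) ≥ (1+ε) n C(r, t-1)`, so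
`C(r+1, t-1) s_{r+1}(G) ≥ ε n C(r, t-1)`.
-/

open Finset

theorem Nat.choose_le_choose_add_mul_choose {k r : ℕ} (hk : k ≤ r + 1) (d : ℕ) :
    d.choose k ≤ r.choose k + (r + 1).choose k * d.choose (r + 1) := by
  rcases le_or_gt d r with hd | hd
  · exact (Nat.choose_le_choose k hd).trans (Nat.le_add_right _ _)
  · calc d.choose k ≤ d.choose k * (d - k).choose (r + 1 - k) :=
          Nat.le_mul_of_pos_right _ (Nat.choose_pos (by omega))
      _ = (r + 1).choose k * d.choose (r + 1) := by rw [← Nat.choose_mul hk, mul_comm]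
      _ ≤ _ := Nat.le_add_left _ _

namespace SimpleGraph

variable {V : Type*} [Fintype V] (G : SimpleGraph V) [DecidableRel G.Adj]

theorem card_cliqueFinset_filter_mem_le_choose_degree [DecidableEq V] (k : ℕ) (v : V) :
    #{s ∈ G.cliqueFinset (k + 1) | v ∈ s} ≤ (G.degree v).choose k := by
  rw [← card_neighborFinset_eq_degree, ← card_powersetCard]
  refine card_le_card_of_injOn (·.erase v) (fun s hs => ?_)
    ((erase_injOn' v).mono fun s hs => (mem_filter.1 hs).2)
  obtain ⟨hs, hv⟩ := mem_filter.1 hs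
  have hs := mem_cliqueFinset_iff.1 hs
  refine mem_powersetCard.2 ⟨fun u hu => ?_, by rw [card_erase_of_mem hv, hs.card_eq]; rfl⟩
  exact (mem_neighborFinset _ _ _).2 <|
    hs.isClique hv (mem_of_mem_erase hu) (ne_of_mem_erase hu).symm

theorem succ_mul_card_cliqueFinset_le_sum_choose_degree [DecidableEq V] (k : ℕ) :
    (k + 1) * #(G.cliqueFinset (k + 1)) ≤ ∑ v, (G.degree v).choose k :=
  calc (k + 1) * #(G.cliqueFinset (k + 1))
      = ∑ s ∈ G.cliqueFinset (k + 1), #s := by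
        rw [sum_const_nat fun s hs => (mem_cliqueFinset_iff.1 hs).card_eq, mul_comm]
    _ = ∑ v, #{s ∈ G.cliqueFinset (k + 1) | v ∈ s} := by
        simpa [bipartiteAbove, bipartiteBelow] using
          (sum_card_bipartiteAbove_eq_sum_card_bipartiteBelow (s := univ)
            (t := G.cliqueFinset (k + 1)) (r := (· ∈ ·))).symm
    _ ≤ _ := sum_le_sum fun v _ => G.card_cliqueFinset_filter_mem_le_choose_degree k v

theorem sum_choose_degree_le {k r : ℕ} (hk : k ≤ r + 1) :
    ∑ v, (G.degree v).choose k
      ≤ Fintype.card V * r.choose k + (r + 1).choose k * ∑ v, (G.degree v).choose (r + 1) :=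
  calc _ ≤ ∑ v, (r.choose k + (r + 1).choose k * (G.degree v).choose (r + 1)) :=
        sum_le_sum fun v _ => Nat.choose_le_choose_add_mul_choose hk _
    _ = _ := by rw [sum_add_distrib, sum_const, card_univ, smul_eq_mul, mul_sum]

end SimpleGraph

/-- Supersaturation for cliques without stars (Theorem 1.8 of the paper). -/
theorem cliques_stars_supersaturation (r t : ℕ) (ht : 2 ≤ t) (htr : t ≤ r)
    (ε : ℝ) (hε : 0 < ε) :
    ∃ δ : ℝ, 0 < δ ∧ ∀ (n : ℕ) (G : SimpleGraph (Fin n)) [DecidableRel G.Adj],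
      (1 + ε) * ((n : ℝ) / (r + 1)) * ((r + 1).choose t : ℝ)
          ≤ ((G.cliqueFinset t).card : ℝ) →
      δ * (n : ℝ) ≤ ((∑ v, (G.degree v).choose (r + 1) : ℕ) : ℝ) := by
  obtain ⟨k, rfl⟩ : ∃ k, t = k + 1 := ⟨t - 1, by omega⟩
  have hCr : (0 : ℝ) < r.choose k := by exact_mod_cast Nat.choose_pos (by omega)
  have hCr1 : (0 : ℝ) < (r + 1).choose k := by exact_mod_cast Nat.choose_pos (by omega)
  refine ⟨ε * r.choose k / (r + 1).choose k, by positivity, fun n G _ hG => ?_⟩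
  have hcount : ((k + 1) * #(G.cliqueFinset (k + 1)) : ℝ)
      ≤ n * r.choose k + (r + 1).choose k * ∑ v, (G.degree v).choose (r + 1) := by
    exact_mod_cast (G.succ_mul_card_cliqueFinset_le_sum_choose_degree k).trans
      (G.sum_choose_degree_le (r := r) (by omega)) |>.trans_eq (by rw [Fintype.card_fin])
  have habs : ((r : ℝ) + 1) * r.choose k = (r + 1).choose (k + 1) * (k + 1) := by
    exact_mod_cast Nat.add_one_mul_choose_eq r k
  have hclique : (1 + ε) * n * r.choose k ≤ (k + 1) * #(G.cliqueFinset (k + 1)) :=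
    calc (1 + ε) * n * r.choose k = (1 + ε) * (n / (r + 1)) * ((r + 1) * r.choose k) := by
          field_simp
      _ = (1 + ε) * (n / (r + 1)) * (r + 1).choose (k + 1) * (k + 1) := by rw [habs]; ring
      _ ≤ _ := by rw [mul_comm]; exact mul_le_mul_of_nonneg_left hG (by positivity)
  rw [div_mul_eq_mul_div, div_le_iff₀ hCr1]
  push_cast at hcount ⊢
  linarith
end

section
/- For every integer r ≥ 1 there is a constant c > 0 such that for infinitely many n there exists a graph on n vertices which contains no K_{2,r+1} as a subgraph and which contains at least c·n^{3/2} triangles. -/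
open SimpleGraph Finset

/-!
Füredi's graph on `F × F` joins `(a, b)` and `(c, d)` when `b + d = a c`: the neighbours of
`(a, b)` lie on the line `y = a x - b`, and distinct vertices give distinct lines, so two vertices
have at most one common neighbour and the graph contains no `K_{2,2}`, let alone `K_{2,r+1}`.
When `2 ≠ 0` in `F`, every 3-set `{a, b, c} ⊆ F` lifts to a triangle with first coordinates
`a, b, c`: put `(a, (a b + a c - b c) / 2)` and its cyclic analogues. Distinct 3-sets give
distinct triangles, so on `q²` vertices there are at least `C(q, 3) ≥ q³ / 27` triangles.
-/

namespace SimpleGraph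

variable {V W α β : Type*} {G : SimpleGraph V}

lemma completeBipartiteGraph_free_of_commonNeighbors_subsingleton [Nontrivial α] [Nontrivial β]
    (hG : ∀ u v, u ≠ v → (G.commonNeighbors u v).Subsingleton) :
    (completeBipartiteGraph α β).Free G := by
  rintro ⟨f⟩
  obtain ⟨a₁, a₂, ha⟩ := exists_pair_ne α
  obtain ⟨b₁, b₂, hb⟩ := exists_pair_ne β
  have hmem (b : β) : f (.inr b) ∈ G.commonNeighbors (f (.inl a₁)) (f (.inl a₂)) :=
    (G.mem_commonNeighbors).2 ⟨f.toHom.map_adj (by simp), f.toHom.map_adj (by simp)⟩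
  have hne : f (.inl a₁) ≠ f (.inl a₂) := f.injective.ne (by simpa using ha)
  exact hb (Sum.inr_injective (f.injective (hG _ _ hne (hmem b₁) (hmem b₂))))

lemma card_cliqueFinset_map_equiv [Fintype V] [Fintype W] [DecidableEq V] [DecidableEq W]
    (e : V ≃ W) [DecidableRel G.Adj] [DecidableRel (G.map e).Adj] (k : ℕ) :
    #((G.map e).cliqueFinset k) = #(G.cliqueFinset k) := by
  convert (congrArg card (cliqueFinset_map_of_equiv G e k)).trans (card_map _)

end SimpleGraph

section Furedi

variable (F : Type*) [Field F]

def furediGraph : SimpleGraph (F × F) where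
  Adj u v := u ≠ v ∧ u.2 + v.2 = u.1 * v.1
  symm := ⟨fun _ _ h => ⟨h.1.symm, by rw [add_comm, mul_comm]; exact h.2⟩⟩
  loopless := ⟨fun _ h => h.1 rfl⟩

instance [DecidableEq F] : DecidableRel (furediGraph F).Adj := fun u v =>
  inferInstanceAs (Decidable (u ≠ v ∧ u.2 + v.2 = u.1 * v.1))

variable {F}

lemma furediGraph_commonNeighbors_subsingleton {u v : F × F} (huv : u ≠ v) :
    ((furediGraph F).commonNeighbors u v).Subsingleton := by
  rintro w ⟨⟨-, hu⟩, -, hv⟩ w' ⟨⟨-, hu'⟩, -, hv'⟩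
  have hfst : u.1 ≠ v.1 := fun h => huv (Prod.ext h (by linear_combination hu - hv + w.1 * h))
  have hw : w.1 = w'.1 := mul_left_cancel₀ (sub_ne_zero.2 hfst) <| by
    linear_combination hu' - hv' - hu + hv
  exact Prod.ext hw (by linear_combination hu - hu' + u.1 * hw)

variable [DecidableEq F]

def furediHeight (s : Finset F) (x : F) : F :=
  (x * ∑ y ∈ s.erase x, y - ∏ y ∈ s.erase x, y) / 2

lemma furediHeight_add_furediHeight (h2 : (2 : F) ≠ 0) {s : Finset F} (hs : #s = 3) {x x' : F}
    (hx : x ∈ s) (hx' : x' ∈ s) (hne : x ≠ x') :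
    furediHeight s x + furediHeight s x' = x * x' := by
  obtain ⟨z, hz⟩ : ∃ z, (s.erase x).erase x' = {z} := card_eq_one.1 <| by
    rw [card_erase_of_mem (mem_erase.2 ⟨hne.symm, hx'⟩), card_erase_of_mem hx, hs]
  have hzx : z ≠ x ∧ z ≠ x' := by
    have := hz ▸ mem_singleton_self z
    simp only [mem_erase] at this
    exact ⟨this.2.1, this.1⟩
  have hsx : s.erase x = {x', z} := by
    rw [← insert_erase (mem_erase.2 ⟨hne.symm, hx'⟩), hz]
  have hsx' : s.erase x' = {x, z} := by
    rw [← insert_erase (mem_erase.2 ⟨hne, hx⟩), erase_right_comm, hz]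
  rw [furediHeight, furediHeight, hsx, hsx', sum_pair hzx.2.symm, prod_pair hzx.2.symm,
    sum_pair hzx.1.symm, prod_pair hzx.1.symm]
  field_simp
  ring

def furediTriangle (s : Finset F) : Finset (F × F) :=
  s.image fun x => (x, furediHeight s x)

lemma image_fst_furediTriangle (s : Finset F) : (furediTriangle s).image Prod.fst = s := by
  simp [furediTriangle, image_image, Function.comp_def]

lemma isNClique_furediTriangle (h2 : (2 : F) ≠ 0) {s : Finset F} (hs : #s = 3) :
    (furediGraph F).IsNClique 3 (furediTriangle s) := by
  refine ⟨?_, ?_⟩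
  · simp only [furediTriangle, isClique_iff, Set.Pairwise, coe_image, Set.mem_image, mem_coe]
    rintro _ ⟨x, hx, rfl⟩ _ ⟨x', hx', rfl⟩ hne
    have hxx' : x ≠ x' := fun h => hne (h ▸ rfl)
    exact ⟨hne, furediHeight_add_furediHeight h2 hs hx hx' hxx'⟩
  · rw [furediTriangle, card_image_of_injective _ (fun x y h => congrArg Prod.fst h), hs]

lemma choose_card_three_le_card_cliqueFinset_furediGraph [Fintype F] (h2 : (2 : F) ≠ 0) :
    (Fintype.card F).choose 3 ≤ #((furediGraph F).cliqueFinset 3) := by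
  rw [← card_univ, ← card_powersetCard]
  refine card_le_card_of_injOn furediTriangle (fun s hs => ?_) fun s _ t _ hst => ?_
  · exact mem_cliqueFinset_iff.2 <| isNClique_furediTriangle h2 (mem_powersetCard_univ.1 hs)
  · rw [← image_fst_furediTriangle s, hst, image_fst_furediTriangle]

end Furedi

lemma cube_le_twentySeven_mul_choose_three {q : ℕ} (hq : 3 ≤ q) :
    q ^ 3 ≤ 27 * q.choose 3 := by
  obtain ⟨m, rfl⟩ := Nat.exists_eq_add_of_le' hq
  have h := Nat.descFactorial_eq_factorial_mul_choose (m + 3) 3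
  simp only [Nat.succ_descFactorial_succ, Nat.descFactorial_zero, Nat.factorial] at h
  ring_nf at h ⊢
  nlinarith

/-- Füredi's construction: `K_{2,r+1}`-free graphs with `Ω(n^{3/2})` triangles. -/
theorem furedi (r : ℕ) (hr : 1 ≤ r) :
    ∃ c : ℝ, 0 < c ∧ ∀ N : ℕ, ∃ n : ℕ, N ≤ n ∧
      ∃ (G : SimpleGraph (Fin n)) (_ : DecidableRel G.Adj),
        (¬ ∃ f : (Fin 2 ⊕ Fin (r + 1)) → Fin n, Function.Injective f ∧
          ∀ a b, (completeBipartiteGraph (Fin 2) (Fin (r + 1))).Adj a b →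
            G.Adj (f a) (f b)) ∧
        c * (n : ℝ) ^ ((3 : ℝ) / 2) ≤ ((G.cliqueFinset 3).card : ℝ) := by
  refine ⟨1 / 27, by norm_num, fun N => ?_⟩
  obtain ⟨p, hpN, hp⟩ := Nat.exists_infinite_primes (max N 3)
  have : Fact p.Prime := ⟨hp⟩
  have hp3 : 3 ≤ p := le_of_max_le_right hpN
  have h2 : (2 : ZMod p) ≠ 0 := Ring.two_ne_zero (by rw [ZMod.ringChar_zmod_n]; omega)
  have hcard : Fintype.card (ZMod p × ZMod p) = p ^ 2 := by simp [ZMod.card, sq]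
  let e := Fintype.equivFinOfCardEq hcard
  have : Nontrivial (Fin (r + 1)) := Fin.nontrivial_iff_two_le.2 (by omega)
  refine ⟨p ^ 2, (le_of_max_le_left hpN).trans (Nat.le_self_pow two_ne_zero p),
    (furediGraph (ZMod p)).map e, Classical.decRel _, ?_, ?_⟩
  · rintro ⟨f, hf, hadj⟩
    exact (free_congr_right (Iso.map e _)).1
      (completeBipartiteGraph_free_of_commonNeighbors_subsingleton
        fun _ _ => furediGraph_commonNeighbors_subsingleton) ⟨⟨⟨f, hadj _ _⟩, hf⟩⟩
  · have hpow : ((p ^ 2 : ℕ) : ℝ) ^ ((3 : ℝ) / 2) = (p : ℝ) ^ 3 := by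
      rw [Nat.cast_pow, ← Real.rpow_natCast, ← Real.rpow_mul p.cast_nonneg]
      norm_num
    have hcount := choose_card_three_le_card_cliqueFinset_furediGraph h2
    rw [ZMod.card] at hcount
    rw [card_cliqueFinset_map_equiv, hpow]
    have hcube : (p : ℝ) ^ 3 ≤ 27 * p.choose 3 := by
      exact_mod_cast cube_le_twentySeven_mul_choose_three hp3
    calc 1 / 27 * (p : ℝ) ^ 3 ≤ p.choose 3 := by linarith
      _ ≤ _ := by exact_mod_cast hcount
end

section
/- Let r and t be integers with 2 ≤ t ≤ r and let ε > 0. If G is a graph on n vertices with s_t(G) ≥ (1 + ε)·n·C(r,t), then s_{r+1}(G) ≥ ε·n·(r − t + 1)/t. -/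
/-!
For every degree `d` and `t ≤ r`,
`(r - t + 1) C(d, t) ≤ (r - t + 1) C(r, t) + t C(r, t) C(d, r + 1)`:
for `d ≤ r` the first term alone suffices, and each step `d → d + 1` beyond `r` raises the left side
by `(r - t + 1) C(d, t - 1)`, which is at most the increment `t C(r, t) C(d, r)` of the right side
because `C(d, r) C(r, t - 1) = C(d, t - 1) C(d - t + 1, r - t + 1)`.
Summing over the vertices and feeding in `s_t(G) ≥ (1 + ε) n C(r, t)` leaves
`(r - t + 1) ε n C(r, t) ≤ t C(r, t) s_{r+1}(G)`.
-/

open Finset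

namespace Nat

theorem sub_mul_choose_le_succ_mul_choose_mul_choose {r s d : ℕ} (hsr : s ≤ r) (hrd : r ≤ d) :
    (r - s) * d.choose s ≤ (s + 1) * r.choose (s + 1) * d.choose r := by
  have hpos : 0 < (d - s).choose (r - s) := choose_pos (by omega)
  calc (r - s) * d.choose s
      ≤ (r - s) * (d.choose s * (d - s).choose (r - s)) :=
        Nat.mul_le_mul_left _ (Nat.le_mul_of_pos_right _ hpos)
    _ = r.choose (s + 1) * (s + 1) * d.choose r := by
        rw [← choose_mul hsr, choose_succ_right_eq]; ring
    _ = (s + 1) * r.choose (s + 1) * d.choose r := by ring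

theorem sub_mul_choose_le_add_mul_choose {r t : ℕ} (htr : t ≤ r) (d : ℕ) :
    (r + 1 - t) * d.choose t ≤ (r + 1 - t) * r.choose t + t * r.choose t * d.choose (r + 1) := by
  obtain _ | s := t
  · simp
  induction d with
  | zero => simp
  | succ d ih =>
    by_cases hdr : d < r
    · have hle := Nat.mul_le_mul_left (r + 1 - (s + 1))
        (choose_le_choose (s + 1) (show d + 1 ≤ r by omega))
      omega
    · have hstep := sub_mul_choose_le_succ_mul_choose_mul_choose (d := d) (by omega : s ≤ r)
        (by omega)
      rw [succ_sub_succ] at ih ⊢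
      rw [choose_succ_succ d s, choose_succ_succ d r]
      linarith [hstep, ih]

end Nat

theorem Finset.sub_mul_sum_choose_le {ι : Type*} (s : Finset ι) (f : ι → ℕ) {r t : ℕ}
    (htr : t ≤ r) :
    (r + 1 - t) * ∑ i ∈ s, (f i).choose t ≤
      (r + 1 - t) * r.choose t * #s + t * r.choose t * ∑ i ∈ s, (f i).choose (r + 1) := by
  rw [mul_sum, mul_sum, mul_comm _ #s, ← smul_eq_mul, ← sum_const, ← sum_add_distrib]
  exact sum_le_sum fun i _ => Nat.sub_mul_choose_le_add_mul_choose htr (f i)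

theorem stars_stars_supersaturation_general (r t : ℕ) (htr : t ≤ r)
    (ε : ℝ) (n : ℕ) (G : SimpleGraph (Fin n)) [DecidableRel G.Adj]
    (h : (1 + ε) * (n : ℝ) * (r.choose t : ℝ)
        ≤ ((∑ v, (G.degree v).choose t : ℕ) : ℝ)) :
    ε * (n : ℝ) * ((r : ℝ) - t + 1) / t
      ≤ ((∑ v, (G.degree v).choose (r + 1) : ℕ) : ℝ) := by
  set St : ℕ := ∑ v, (G.degree v).choose t
  set Sr : ℕ := ∑ v, (G.degree v).choose (r + 1)
  have hsum : ((r : ℝ) - t + 1) * St ≤ ((r : ℝ) - t + 1) * r.choose t * n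
      + t * r.choose t * Sr := by
    have hN : (r + 1 - t) * St ≤ (r + 1 - t) * r.choose t * n + t * r.choose t * Sr := by
      simpa using univ.sub_mul_sum_choose_le (fun v => G.degree v) htr
    have hR := (Nat.cast_le (α := ℝ)).2 hN
    simp only [Nat.cast_add, Nat.cast_mul, Nat.cast_sub (show t ≤ r + 1 by omega),
      Nat.cast_one] at hR
    linarith
  have hc : (0 : ℝ) < r.choose t := by exact_mod_cast Nat.choose_pos htr
  have ha : (0 : ℝ) ≤ (r : ℝ) - t + 1 := by linarith [(Nat.cast_le (α := ℝ)).2 htr]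
  have hmain : ε * n * ((r : ℝ) - t + 1) * r.choose t ≤ Sr * t * r.choose t := by
    linarith [mul_le_mul_of_nonneg_left h ha]
  exact div_le_of_le_mul₀ (by positivity) (by positivity) (le_of_mul_le_mul_right hmain hc)

/-- Supersaturation for stars without stars. -/
theorem stars_stars_supersaturation (r t : ℕ) (ht : 2 ≤ t) (htr : t ≤ r)
    (ε : ℝ) (hε : 0 < ε) (n : ℕ) (G : SimpleGraph (Fin n)) [DecidableRel G.Adj]
    (h : (1 + ε) * (n : ℝ) * (r.choose t : ℝ)
        ≤ ((∑ v, (G.degree v).choose t : ℕ) : ℝ)) :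
    ε * (n : ℝ) * ((r : ℝ) - t + 1) / t
      ≤ ((∑ v, (G.degree v).choose (r + 1) : ℕ) : ℝ) :=
  stars_stars_supersaturation_general r t htr ε n G h
end

section
/- For all integers 1 ≤ t < s, the function f_s ∘ f_t^{−1} is convex on (0, ∞) and strictly convex on (C(s−1, t), ∞). -/
/-! Put `u = f_t⁻¹ y`. Where `u > t - 1` the derivative of `f_s ∘ f_t⁻¹` at `y` is
`f_s' u / f_t' u`. Factor `f_s = f_t · q` with `q` a positive multiple of
`∏_{t ≤ i < s} (x - i)`; then `f_s' / f_t' = q + (f_t / f_t') q'`, and for `u > s - 1` the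
factor `q` is strictly increasing while `q'` and `f_t / f_t' = 1 / ∑_{i < t} 1 / (u - i)` are
nonnegative and increasing. So the derivative is strictly increasing beyond
`f_t (s - 1) = C(s - 1, t)`, below which `f_s ∘ f_t⁻¹` vanishes; being increasing there, it stays
convex when extended by `0` to the left. -/

/-- `fm m x = C(x, m)` for `x ≥ m - 1`, and `0` for `x < m - 1`. -/
noncomputable def fm (m : ℕ) (x : ℝ) : ℝ :=
  if (m : ℝ) - 1 ≤ x then (∏ i ∈ Finset.range m, (x - i)) / (m.factorial : ℝ) else 0

open Finset Set Filter Topology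

section ProdSub

variable {ι : Type*} {S T : Finset ι} {a : ι → ℝ} {c x : ℝ}

noncomputable def prodSub (S : Finset ι) (a : ι → ℝ) (x : ℝ) : ℝ := ∏ i ∈ S, (x - a i)

section Bounded

variable (ha : ∀ i ∈ S, a i ≤ c)
include ha

theorem prodSub_nonneg (hx : c ≤ x) : 0 ≤ prodSub S a x :=
  prod_nonneg fun i hi => sub_nonneg.2 ((ha i hi).trans hx)

theorem prodSub_pos (hx : c < x) : 0 < prodSub S a x :=
  prod_pos fun i hi => sub_pos.2 ((ha i hi).trans_lt hx)

theorem prodSub_strictMonoOn (hS : S.Nonempty) : StrictMonoOn (prodSub S a) (Ici c) := by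
  intro x hx y _ hxy
  by_cases h0 : prodSub S a x = 0
  · exact h0 ▸ prodSub_pos ha (lt_of_le_of_lt hx hxy)
  · refine prod_lt_prod_of_nonempty (fun i hi => ?_) (fun i _ => by linarith) hS
    exact lt_of_le_of_ne (sub_nonneg.2 ((ha i hi).trans hx)) (prod_ne_zero_iff.1 h0 i hi).symm

end Bounded

variable [DecidableEq ι]

noncomputable def derivProdSub (S : Finset ι) (a : ι → ℝ) (x : ℝ) : ℝ :=
  ∑ i ∈ S, ∏ j ∈ S.erase i, (x - a j)

theorem hasDerivAt_prodSub (S : Finset ι) (a : ι → ℝ) (x : ℝ) :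
    HasDerivAt (prodSub S a) (derivProdSub S a x) x := by
  have h := HasDerivAt.fun_finsetProd (u := S) (f := fun i y => y - a i) (f' := fun _ => 1)
    fun i _ => (hasDerivAt_id x).sub_const (a i)
  simp only [smul_eq_mul, mul_one] at h
  exact h

theorem prodSub_union (h : Disjoint S T) : prodSub (S ∪ T) a = prodSub S a * prodSub T a :=
  funext fun _ => prod_union h

theorem derivProdSub_union (h : Disjoint S T) (x : ℝ) :
    derivProdSub (S ∪ T) a x =
      derivProdSub S a x * prodSub T a x + prodSub S a x * derivProdSub T a x := by
  refine (hasDerivAt_prodSub _ a x).unique ?_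
  rw [prodSub_union h]
  exact (hasDerivAt_prodSub S a x).mul (hasDerivAt_prodSub T a x)

section Bounded

variable (ha : ∀ i ∈ S, a i ≤ c)
include ha

theorem derivProdSub_nonneg (hx : c ≤ x) : 0 ≤ derivProdSub S a x :=
  sum_nonneg fun _ _ => prod_nonneg fun j hj =>
    sub_nonneg.2 ((ha j (mem_of_mem_erase hj)).trans hx)

theorem derivProdSub_monotoneOn : MonotoneOn (derivProdSub S a) (Ici c) := fun x hx y _ hxy =>
  sum_le_sum fun _ _ => prod_le_prod
    (fun j hj => sub_nonneg.2 ((ha j (mem_of_mem_erase hj)).trans hx)) fun _ _ => by linarith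

theorem derivProdSub_eq_mul_sum_inv (hx : c < x) :
    derivProdSub S a x = prodSub S a x * ∑ i ∈ S, (x - a i)⁻¹ := by
  rw [mul_sum, derivProdSub]
  refine sum_congr rfl fun i hi => ?_
  rw [prodSub, ← mul_prod_erase S _ hi, mul_comm,
    inv_mul_cancel_left₀ (sub_pos.2 ((ha i hi).trans_lt hx)).ne']

theorem derivProdSub_pos (hS : S.Nonempty) (hx : c < x) : 0 < derivProdSub S a x := by
  rw [derivProdSub_eq_mul_sum_inv ha hx]
  exact mul_pos (prodSub_pos ha hx)
    (sum_pos (fun i hi => inv_pos.2 (sub_pos.2 ((ha i hi).trans_lt hx))) hS)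

theorem prodSub_div_derivProdSub_monotoneOn (hS : S.Nonempty) :
    MonotoneOn (fun x => prodSub S a x / derivProdSub S a x) (Ioi c) := by
  intro x hx y hy hxy
  have hsub : ∀ z ∈ Ioi c, ∀ i ∈ S, 0 < z - a i := fun z hz i hi =>
    sub_pos.2 ((ha i hi).trans_lt hz)
  simp only [derivProdSub_eq_mul_sum_inv ha hx, derivProdSub_eq_mul_sum_inv ha hy,
    div_mul_cancel_left₀ (prodSub_pos ha hx).ne', div_mul_cancel_left₀ (prodSub_pos ha hy).ne']
  refine inv_anti₀ (sum_pos (fun i hi => inv_pos.2 (hsub y hy i hi)) hS) ?_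
  exact sum_le_sum fun i hi => inv_anti₀ (hsub x hx i hi) (by linarith)

end Bounded

theorem strictMonoOn_derivProdSub_union_div (hST : Disjoint S T) (hS : S.Nonempty)
    (hT : T.Nonempty) (haS : ∀ i ∈ S, a i ≤ c) (haT : ∀ i ∈ T, a i ≤ c) :
    StrictMonoOn (fun x => derivProdSub (S ∪ T) a x / derivProdSub S a x) (Ioi c) := by
  have key : ∀ x ∈ Ioi c, derivProdSub (S ∪ T) a x / derivProdSub S a x =
      prodSub T a x + prodSub S a x / derivProdSub S a x * derivProdSub T a x := by
    intro x hx
    have := (derivProdSub_pos haS hS hx).ne'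
    rw [derivProdSub_union hST]
    field_simp
  intro x hx y hy hxy
  have hx' : x ∈ Ici c := Ioi_subset_Ici_self hx
  have hy' : y ∈ Ici c := Ioi_subset_Ici_self hy
  simp only [key x hx, key y hy]
  have hP := prodSub_strictMonoOn haT hT hx' hy' hxy
  have hPD := prodSub_div_derivProdSub_monotoneOn haS hS hx hy hxy.le
  have hD := derivProdSub_monotoneOn haT hx' hy' hxy.le
  have := mul_le_mul hPD hD (derivProdSub_nonneg haT hx')
    (div_nonneg (prodSub_nonneg haS hy') (derivProdSub_nonneg haS hy'))
  linarith

end ProdSub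

section BinomialFunction

open Nat

variable {m : ℕ} {x : ℝ}

theorem natCast_le_sub_one_of_lt {i n : ℕ} (h : i < n) : (i : ℝ) ≤ n - 1 := by
  have : (i : ℝ) + 1 ≤ n := by exact_mod_cast h
  linarith

theorem natCast_le_of_mem_range : ∀ i ∈ range m, (i : ℝ) ≤ m - 1 :=
  fun _ hi => natCast_le_sub_one_of_lt (mem_range.1 hi)

theorem fm_eq_prodSub (hx : (m : ℝ) - 1 ≤ x) : fm m x = prodSub (range m) Nat.cast x / m ! :=
  if_pos hx

theorem fm_natCast (m n : ℕ) : fm m n = n.choose m := by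
  by_cases h : (m : ℝ) - 1 ≤ n
  · rw [fm_eq_prodSub h, prodSub, ← descPochhammer_eval_eq_prod_range,
      cast_choose_eq_descPochhammer_div]
  · have hnm : n < m := by exact_mod_cast (show (n : ℝ) < m by linarith)
    rw [fm, if_neg h, choose_eq_zero_of_lt hnm, cast_zero]

theorem fm_nonneg (hx : (m : ℝ) - 1 ≤ x) : 0 ≤ fm m x := by
  rw [fm_eq_prodSub hx]
  exact div_nonneg (prodSub_nonneg natCast_le_of_mem_range hx) (by positivity)

theorem fm_pos (hx : (m : ℝ) - 1 < x) : 0 < fm m x := by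
  rw [fm_eq_prodSub hx.le]
  exact div_pos (prodSub_pos natCast_le_of_mem_range hx) (by positivity)

theorem prodSub_range_natCast_sub_one (hm : 1 ≤ m) :
    prodSub (range m) Nat.cast (m - 1 : ℝ) = 0 :=
  prod_eq_zero (mem_range.2 (Nat.sub_one_lt_of_lt hm)) (by rw [Nat.cast_pred hm]; ring)

theorem fm_eq_zero_of_le (hm : 1 ≤ m) (hx : x ≤ m - 1) : fm m x = 0 := by
  rcases hx.lt_or_eq with hx | rfl
  · exact if_neg (not_le.2 hx)
  · rw [fm_eq_prodSub le_rfl, prodSub_range_natCast_sub_one hm, zero_div]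

theorem continuous_fm (hm : 1 ≤ m) : Continuous (fm m) := by
  refine Continuous.if_le (by fun_prop) continuous_const continuous_const continuous_id ?_
  intro x hx
  rw [← hx, ← prodSub, prodSub_range_natCast_sub_one hm, zero_div]

theorem fm_strictMonoOn (hm : 1 ≤ m) : StrictMonoOn (fm m) (Ici (m - 1 : ℝ)) := by
  intro x hx y hy hxy
  rw [fm_eq_prodSub hx, fm_eq_prodSub hy]
  exact div_lt_div_of_pos_right
    (prodSub_strictMonoOn natCast_le_of_mem_range ⟨0, mem_range.2 hm⟩ hx hy hxy) (by positivity)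

noncomputable def derivFm (m : ℕ) (x : ℝ) : ℝ := derivProdSub (range m) Nat.cast x / m !

theorem hasDerivAt_fm (hx : (m : ℝ) - 1 < x) : HasDerivAt (fm m) (derivFm m x) x := by
  refine ((hasDerivAt_prodSub (range m) Nat.cast x).div_const _).congr_of_eventuallyEq ?_
  filter_upwards [eventually_gt_nhds hx] with y hy
  exact fm_eq_prodSub hy.le

theorem derivFm_pos (hm : 1 ≤ m) (hx : (m : ℝ) - 1 < x) : 0 < derivFm m x :=
  div_pos (derivProdSub_pos natCast_le_of_mem_range ⟨0, mem_range.2 hm⟩ hx) (by positivity)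

theorem strictMonoOn_derivFm_div {t s : ℕ} (ht : 1 ≤ t) (hts : t < s) :
    StrictMonoOn (fun x => derivFm s x / derivFm t x) (Ioi (s - 1 : ℝ)) := by
  have hsplit : range s = range t ∪ Ico t s := by
    rw [range_eq_Ico, range_eq_Ico, Finset.Ico_union_Ico_eq_Ico (zero_le t) hts.le]
  have hratio := strictMonoOn_derivProdSub_union_div (a := Nat.cast)
    (by rw [range_eq_Ico]; exact Ico_disjoint_Ico_consecutive 0 t s)
    ⟨0, mem_range.2 ht⟩ ⟨t, left_mem_Ico.2 hts⟩
    (fun i hi => (natCast_le_sub_one_of_lt (mem_range.1 hi)).trans (by gcongr))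
    (fun i hi => natCast_le_sub_one_of_lt (mem_Ico.1 hi).2)
  rw [← hsplit] at hratio
  have hfactor : ∀ x, derivFm s x / derivFm t x =
      (t ! / s ! : ℝ) *
        (derivProdSub (range s) Nat.cast x / derivProdSub (range t) Nat.cast x) := by
    intro x
    simp only [derivFm, div_eq_mul_inv, mul_inv, inv_inv]
    ring
  intro x hx y hy hxy
  simp only [hfactor]
  exact mul_lt_mul_of_pos_left (hratio hx hy hxy) (by positivity)

end BinomialFunction

section RightInverse

variable {φ finv : ℝ → ℝ} {c y : ℝ} {D : Set ℝ}

variable (hφ : StrictMonoOn φ (Ici c)) (hmaps : MapsTo finv D (Ici c))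
  (hinv : RightInvOn finv φ D)
include hφ hmaps hinv

theorem StrictMonoOn.le_iff_le_of_rightInvOn {z : ℝ} (hy : y ∈ D) (hz : c ≤ z) :
    finv y ≤ z ↔ y ≤ φ z := by
  conv_rhs => rw [← hinv hy]
  exact (hφ.le_iff_le (hmaps hy) hz).symm

theorem StrictMonoOn.strictMonoOn_of_rightInvOn : StrictMonoOn finv D := fun y hy z hz hyz =>
  (hφ.lt_iff_lt (hmaps hy) (hmaps hz)).1 (by rwa [hinv hy, hinv hz])

theorem StrictMonoOn.leftInvOn_of_rightInvOn (hφD : MapsTo φ (Ici c) D) :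
    LeftInvOn finv φ (Ici c) := fun _ hz =>
  hφ.injOn (hmaps (hφD hz)) hz (hinv (hφD hz))

theorem StrictMonoOn.continuousAt_of_rightInvOn (hφD : MapsTo φ (Ici c) D) (hD : D ∈ 𝓝 y)
    (hy : c < finv y) : ContinuousAt finv y :=
  continuousAt_of_monotoneOn_of_image_mem_nhds
    (hφ.strictMonoOn_of_rightInvOn hmaps hinv).monotoneOn hD
    (mem_of_superset (Ici_mem_nhds hy) fun z hz =>
      ⟨φ z, hφD hz, hφ.leftInvOn_of_rightInvOn hmaps hinv hφD hz⟩)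

theorem StrictMonoOn.hasDerivAt_of_rightInvOn (hφD : MapsTo φ (Ici c) D) (hD : D ∈ 𝓝 y)
    (hy : c < finv y) {φ' : ℝ} (hφ' : HasDerivAt φ φ' (finv y)) (hφ'0 : φ' ≠ 0) :
    HasDerivAt finv φ'⁻¹ y :=
  hφ'.of_local_left_inverse (hφ.continuousAt_of_rightInvOn hmaps hinv hφD hD hy) hφ'0
    (eventually_of_mem hD fun _ hz => hinv hz)

end RightInverse

theorem ConvexOn.of_eq_comp_max {g : ℝ → ℝ} {b : ℝ} {D : Set ℝ} (hD : Convex ℝ D)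
    (hg : ConvexOn ℝ (Ici b) g) (hmono : MonotoneOn g (Ici b))
    (hflat : ∀ y ∈ D, g (max y b) = g y) : ConvexOn ℝ D g := by
  have hrange : range (fun y : ℝ => max y b) = Ici b :=
    ext fun z => ⟨fun ⟨y, hy⟩ => hy ▸ le_max_right y b, fun hz => ⟨z, max_eq_left hz⟩⟩
  have hmax : ConvexOn ℝ univ fun y : ℝ => max y b :=
    (convexOn_id convex_univ).sup (convexOn_const b convex_univ)
  rw [← image_univ] at hrange
  rw [← hrange] at hg hmono
  exact ((hg.comp hmax hmono).subset (subset_univ D) hD).congr fun y hy => hflat y hy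

section InverseComposition

variable {t s : ℕ} {finv : ℝ → ℝ} {y : ℝ} (ht : 1 ≤ t)
  (hmaps : MapsTo finv (Ici 0) (Ici ((t : ℝ) - 1))) (hinv : RightInvOn finv (fm t) (Ici 0))
include ht hmaps hinv

theorem hasDerivAt_finv (hy : 0 < y) : HasDerivAt finv (derivFm t (finv y))⁻¹ y := by
  have hlt : (t : ℝ) - 1 < finv y := by
    rw [← not_le, (fm_strictMonoOn ht).le_iff_le_of_rightInvOn hmaps hinv hy.le le_rfl,
      fm_eq_zero_of_le ht le_rfl, not_le]
    exact hy
  exact (fm_strictMonoOn ht).hasDerivAt_of_rightInvOn hmaps hinv (fun _ hz => fm_nonneg hz)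
    (Ici_mem_nhds hy) hlt (hasDerivAt_fm hlt) (derivFm_pos ht hlt).ne'

variable (hts : t < s)
include hts

theorem finv_fm_sub_one : finv (fm t (s - 1)) = s - 1 := by
  have : (t : ℝ) - 1 ≤ s - 1 := by gcongr
  exact (fm_strictMonoOn ht).leftInvOn_of_rightInvOn hmaps hinv (fun _ hz => fm_nonneg hz) this

theorem strictConvexOn_fm_comp_finv :
    StrictConvexOn ℝ (Ici (fm t (s - 1))) fun y => fm s (finv y) := by
  have hpos : 0 < fm t (s - 1) := fm_pos (by gcongr)
  have hfinv := (fm_strictMonoOn ht).strictMonoOn_of_rightInvOn hmaps hinv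
  have hgt : ∀ y ∈ Ioi (fm t (s - 1)), (s : ℝ) - 1 < finv y := fun y hy =>
    finv_fm_sub_one ht hmaps hinv hts ▸ hfinv hpos.le (hpos.trans hy).le hy
  have hderiv : ∀ y ∈ Ioi (fm t (s - 1)),
      HasDerivAt (fun y => fm s (finv y)) (derivFm s (finv y) * (derivFm t (finv y))⁻¹) y :=
    fun y hy => (hasDerivAt_fm (hgt y hy)).comp y (hasDerivAt_finv ht hmaps hinv (hpos.trans hy))
  refine StrictMonoOn.strictConvexOn_of_deriv (convex_Ici _) (fun y hy => ?_) ?_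
  · exact ((continuous_fm (ht.trans hts.le)).continuousAt.comp
      (hasDerivAt_finv ht hmaps hinv (hpos.trans_le hy)).continuousAt).continuousWithinAt
  · rw [interior_Ici]
    intro a ha b hb hab
    rw [(hderiv a ha).deriv, (hderiv b hb).deriv]
    exact strictMonoOn_derivFm_div ht hts (hgt a ha) (hgt b hb)
      (hfinv (hpos.trans ha).le (hpos.trans hb).le hab)

theorem monotoneOn_fm_comp_finv :
    MonotoneOn (fun y => fm s (finv y)) (Ici (fm t (s - 1))) := by
  have hpos : 0 ≤ fm t (s - 1) := fm_nonneg (by gcongr)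
  have hfinv := ((fm_strictMonoOn ht).strictMonoOn_of_rightInvOn hmaps hinv).monotoneOn
  refine (fm_strictMonoOn (ht.trans hts.le)).monotoneOn.comp
    (hfinv.mono fun y hy => hpos.trans hy) fun y hy => ?_
  exact finv_fm_sub_one ht hmaps hinv hts ▸ hfinv hpos (hpos.trans hy) hy

theorem fm_comp_finv_max (hy : 0 ≤ y) : fm s (finv (max y (fm t (s - 1)))) = fm s (finv y) := by
  have hpos : 0 ≤ fm t (s - 1) := fm_nonneg (by gcongr)
  have hfinv := ((fm_strictMonoOn ht).strictMonoOn_of_rightInvOn hmaps hinv).monotoneOn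
  have hs : 1 ≤ s := ht.trans hts.le
  rcases le_total y (fm t (s - 1)) with h | h
  · rw [max_eq_right h, finv_fm_sub_one ht hmaps hinv hts, fm_eq_zero_of_le hs le_rfl,
      fm_eq_zero_of_le hs (finv_fm_sub_one ht hmaps hinv hts ▸ hfinv hy hpos h)]
  · rw [max_eq_left h]

end InverseComposition

/-- Lemma 2.2: `f_s ∘ f_t⁻¹` is convex on `(0,∞)` and strictly convex on
`(C(s-1,t), ∞)`. The inverse `f_t⁻¹` of the restriction of `f_t` to `[t-1,∞)` is
characterized by `finv y ≥ t - 1` and `f_t (finv y) = y` for `y ≥ 0`. -/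
theorem convexity_lemma (t s : ℕ) (ht : 1 ≤ t) (hts : t < s)
    (finv : ℝ → ℝ)
    (hinv : ∀ y : ℝ, 0 ≤ y → (t : ℝ) - 1 ≤ finv y ∧ fm t (finv y) = y) :
    ConvexOn ℝ (Set.Ioi (0 : ℝ)) (fun x => fm s (finv x)) ∧
      StrictConvexOn ℝ (Set.Ioi (((s - 1).choose t : ℕ) : ℝ))
        (fun x => fm s (finv x)) := by
  have hmaps : MapsTo finv (Ici 0) (Ici ((t : ℝ) - 1)) := fun y hy => (hinv y hy).1
  have hright : RightInvOn finv (fm t) (Ici 0) := fun y hy => (hinv y hy).2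
  have hx0 : fm t (s - 1) = ((s - 1).choose t : ℕ) := by
    rw [← fm_natCast, Nat.cast_pred (by omega)]
  have hconv := strictConvexOn_fm_comp_finv ht hmaps hright hts
  rw [← hx0]
  exact ⟨ConvexOn.of_eq_comp_max (convex_Ioi 0) hconv.convexOn
      (monotoneOn_fm_comp_finv ht hmaps hright hts)
      fun y hy => fm_comp_finv_max ht hmaps hright hts hy.le,
    hconv.subset Ioi_subset_Ici_self (convex_Ioi _)⟩
end

section
/- Let r ≥ 1 and t ≥ 2 be integers and let n ≥ t + 1. If G is a graph on n vertices containing no K_{r+1}, and s_t(G) is maximal among all K_{r+1}-free graphs on n vertices, then non-adjacency is an equivalence relation on V(G); that is, G is a complete multipartite graph. -/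
/-!
Two non-adjacent vertices `s`, `u` of an extremal graph `G` can be symmetrized: replacing `u` by
a copy of `s` (or `s` by a copy of `u`) keeps `G` free of `K_{r+1}`. By discrete convexity of
`d ↦ C(d, t)`, the two symmetrized graphs together have at least twice as many stars as `G`, with
equality only if every vertex adjacent to exactly one of `s`, `u` has degree at most `t - 2`; then
`C(d(s), t) = C(d(u), t)`. In particular a vertex of degree at least `t` is adjacent to every
vertex of degree less than `t`.

If now `x ~ z` while `y` is adjacent to neither, then `x` and `z` have degree less than `t`. Keep
all edges at vertices of degree at least `t`, and replace the graph on the low-degree vertices by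
the star centred at `x`: every clique meets the low vertices in at most two of them, so its high
part together with `x` and `z` is a clique of `G`, and the new graph is still free of `K_{r+1}`.
High degrees do not change, and `x` gets degree `n - 1 ≥ t`, so the number of stars grows.
-/

open Finset

theorem Nat.choose_add_two_add_choose (e k : ℕ) :
    (e + 2).choose (k + 2) + e.choose (k + 2) = 2 * (e + 1).choose (k + 2) + e.choose k := by
  have h₁ : (e + 2).choose (k + 2) = (e + 1).choose (k + 1) + (e + 1).choose (k + 2) :=
    Nat.choose_succ_succ' _ _
  have h₂ : (e + 1).choose (k + 1) = e.choose k + e.choose (k + 1) := Nat.choose_succ_succ' _ _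
  have h₃ : (e + 1).choose (k + 2) = e.choose (k + 1) + e.choose (k + 2) :=
    Nat.choose_succ_succ' _ _
  omega

theorem Nat.two_mul_choose_le_choose_add_choose {t d d₁ d₂ : ℕ} (ht : 2 ≤ t)
    (h : d₁ + d₂ = 2 * d) (h₁ : d₁ ≤ d + 1) (h₂ : d₂ ≤ d + 1) :
    2 * d.choose t ≤ d₁.choose t + d₂.choose t ∧
      (2 * d.choose t = d₁.choose t + d₂.choose t → d₁ ≠ d → d + 2 ≤ t) := by
  obtain ⟨k, rfl⟩ : ∃ k, t = k + 2 := ⟨t - 2, by omega⟩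
  have convex (e : ℕ) :
      2 * (e + 1).choose (k + 2) ≤ (e + 2).choose (k + 2) + e.choose (k + 2) ∧
        (2 * (e + 1).choose (k + 2) = (e + 2).choose (k + 2) + e.choose (k + 2) →
          e + 3 ≤ k + 2) := by
    have hc := Nat.choose_add_two_add_choose e k
    refine ⟨by omega, fun heq => ?_⟩
    have : e < k := Nat.choose_eq_zero_iff.1 (by omega)
    omega
  rcases lt_trichotomy d₁ d with hlt | rfl | hgt
  · obtain rfl : d = d₁ + 1 := by omega
    obtain rfl : d₂ = d₁ + 2 := by omega
    rw [add_comm (d₁.choose _)]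
    exact ⟨(convex d₁).1, fun heq _ => (convex d₁).2 heq⟩
  · obtain rfl : d₂ = d₁ := by omega
    omega
  · obtain rfl : d₁ = d₂ + 2 := by omega
    obtain rfl : d = d₂ + 1 := by omega
    exact ⟨(convex d₂).1, fun heq _ => (convex d₂).2 heq⟩

namespace SimpleGraph

variable {V : Type*}

def starCount [Fintype V] (H : SimpleGraph V) [DecidableRel H.Adj] (t : ℕ) : ℕ :=
  ∑ v, (H.degree v).choose t

section ReplaceInducedByStar

variable [DecidableEq V] (G : SimpleGraph V)

def replaceInducedByStar (L : Finset V) (x : V) : SimpleGraph V where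
  Adj a b := a ≠ b ∧ if a ∈ L ∧ b ∈ L then a = x ∨ b = x else G.Adj a b
  symm := ⟨fun a b ⟨hab, h⟩ => ⟨hab.symm, by
    split_ifs at h ⊢ with h₁ h₂ h₂
    · exact h.symm
    · exact absurd h₁.symm h₂
    · exact absurd h₂.symm h₁
    · exact h.symm⟩⟩
  loopless := ⟨fun _ h => h.1 rfl⟩

variable {G} {L : Finset V} {x : V}

theorem replaceInducedByStar_adj {a b : V} :
    (G.replaceInducedByStar L x).Adj a b ↔
      a ≠ b ∧ if a ∈ L ∧ b ∈ L then a = x ∨ b = x else G.Adj a b :=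
  Iff.rfl

instance [DecidableRel G.Adj] : DecidableRel (G.replaceInducedByStar L x).Adj := fun _ _ =>
  decidable_of_iff' _ replaceInducedByStar_adj

theorem card_filter_mem_le_two_of_isClique {C : Finset V}
    (hC : (G.replaceInducedByStar L x).IsClique (C : Set V)) : #(C.filter (· ∈ L)) ≤ 2 := by
  have hle : #((C.filter (· ∈ L)).erase x) ≤ 1 := by
    refine card_le_one.2 fun a ha b hb => by_contra fun hab => ?_
    simp only [mem_erase, mem_filter] at ha hb
    have := (replaceInducedByStar_adj.1 (hC ha.2.1 hb.2.1 hab)).2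
    simp only [ha.2.2, hb.2.2, and_self, if_true] at this
    exact this.elim ha.1 hb.1
  have := pred_card_le_card_erase (s := C.filter (· ∈ L)) (a := x)
  omega

theorem cliqueFree_replaceInducedByStar {m : ℕ} (hfree : G.CliqueFree m) {z : V}
    (hx : x ∈ L) (hz : z ∈ L) (hxz : G.Adj x z) (hL : ∀ a ∉ L, G.Adj a x ∧ G.Adj a z) :
    (G.replaceInducedByStar L x).CliqueFree m := by
  rintro C ⟨hC, rfl⟩
  set K := insert x (insert z (C.filter (· ∉ L)))
  have hK : G.IsClique (K : Set V) := by
    have hout : ∀ a ∈ C.filter (· ∉ L), ∀ b ∈ C.filter (· ∉ L), a ≠ b → G.Adj a b := by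
      intro a ha b hb hab
      simp only [mem_filter] at ha hb
      simpa [ha.2, hb.2] using (replaceInducedByStar_adj.1 (hC ha.1 hb.1 hab)).2
    simp only [K, coe_insert]
    refine ((IsClique.insert hout fun b hb _ => ?_).insert fun b hb _ => ?_)
    · exact ((hL b (mem_filter.1 hb).2).2).symm
    · rcases hb with rfl | hb
      · exact hxz
      · exact ((hL b (mem_filter.1 hb).2).1).symm
  have hcard : #C ≤ #K := by
    have hxK : x ∉ insert z (C.filter (· ∉ L)) := by
      simp [hx, G.ne_of_adj hxz]
    rw [card_insert_of_notMem hxK, card_insert_of_notMem (by simp [hz]),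
      ← card_filter_add_card_filter_not (· ∈ L) (s := C)]
    have := card_filter_mem_le_two_of_isClique hC
    omega
  exact hfree.mono hcard K ⟨hK, rfl⟩

variable [Fintype V] [DecidableRel G.Adj]

theorem degree_replaceInducedByStar_of_notMem {v : V} (hv : v ∉ L) :
    (G.replaceInducedByStar L x).degree v = G.degree v := by
  simp only [← card_neighborFinset_eq_degree]
  congr 1
  ext b
  simp only [mem_neighborFinset, replaceInducedByStar_adj, hv, false_and, if_false]
  exact ⟨And.right, fun h => ⟨G.ne_of_adj h, h⟩⟩

theorem degree_replaceInducedByStar_self (hx : x ∈ L) (hxL : ∀ v ∉ L, G.Adj x v) :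
    (G.replaceInducedByStar L x).degree x = Fintype.card V - 1 := by
  rw [degree_eq_card_sub_one]
  intro v hxv
  refine replaceInducedByStar_adj.2 ⟨hxv, ?_⟩
  by_cases hv : v ∈ L
  · simp [hx, hv]
  · simpa [hv] using hxL v hv

theorem starCount_add_choose_le_starCount_replaceInducedByStar {t : ℕ}
    (hlow : ∀ v ∈ L, G.degree v < t) (hx : x ∈ L) :
    G.starCount t + ((G.replaceInducedByStar L x).degree x).choose t ≤
      (G.replaceInducedByStar L x).starCount t := by
  have hhigh : ∑ v ∈ Lᶜ, (G.degree v).choose t =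
      ∑ v ∈ Lᶜ, ((G.replaceInducedByStar L x).degree v).choose t :=
    sum_congr rfl fun v hv => by rw [degree_replaceInducedByStar_of_notMem (mem_compl.1 hv)]
  have hzero : ∑ v ∈ L, (G.degree v).choose t = 0 :=
    sum_eq_zero fun v hv => Nat.choose_eq_zero_of_lt (hlow v hv)
  rw [starCount, starCount, ← sum_compl_add_sum L, ← sum_compl_add_sum L, hzero, hhigh]
  rw [add_zero]
  gcongr
  exact single_le_sum (f := fun v => ((G.replaceInducedByStar L x).degree v).choose t)
    (fun _ _ => Nat.zero_le _) hx

end ReplaceInducedByStar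

section ReplaceVertex

variable [Fintype V] [DecidableEq V] (G : SimpleGraph V) [DecidableRel G.Adj]

theorem degree_replaceVertex_add_ite {s u w : V} (hw : w ≠ u) :
    (G.replaceVertex s u).degree w + (if G.Adj w u then 1 else 0) =
      G.degree w + (if G.Adj w s then 1 else 0) := by
  have hadj : ∀ v ∈ univ.erase u, (G.replaceVertex s u).Adj w v ↔ G.Adj w v := fun v hv =>
    G.adj_replaceVertex_iff_of_ne s hw (ne_of_mem_erase hv)
  have hadju : (G.replaceVertex s u).Adj w u ↔ G.Adj w s := by
    rw [adj_comm, G.adj_replaceVertex_iff_of_ne_right s hw, adj_comm]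
  simp only [← card_neighborFinset_eq_degree, neighborFinset_eq_filter, card_filter,
    ← add_sum_erase _ _ (mem_univ u), if_congr hadju rfl rfl, sum_congr rfl fun v hv =>
      if_congr (hadj v hv) rfl rfl]
  ring

theorem degree_replaceVertex_left_of_not_adj {s u : V} (h : ¬G.Adj s u) :
    (G.replaceVertex s u).degree s = G.degree s := by
  simp only [← card_neighborFinset_eq_degree]
  congr 1
  ext v
  simp only [mem_neighborFinset]
  by_cases hv : v = u
  · subst hv
    exact iff_of_false (G.not_adj_replaceVertex_same s v) h
  · exact G.adj_replaceVertex_iff_of_ne_left s hv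

theorem degree_replaceVertex_right_of_not_adj {s u : V} (h : ¬G.Adj s u) :
    (G.replaceVertex s u).degree u = G.degree s := by
  simp only [← card_neighborFinset_eq_degree]
  congr 1
  ext v
  simp only [mem_neighborFinset]
  by_cases hv : v = u
  · subst hv
    exact iff_of_false (G.replaceVertex s v).irrefl h
  · exact G.adj_replaceVertex_iff_of_ne_right s hv

theorem starCount_eq_sum_compl_add {s u : V} (hne : s ≠ u) (H : SimpleGraph V)
    [DecidableRel H.Adj] (t : ℕ) :
    H.starCount t = ∑ w ∈ {s, u}ᶜ, (H.degree w).choose t +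
      ((H.degree s).choose t + (H.degree u).choose t) := by
  rw [starCount, ← sum_compl_add_sum {s, u}, sum_pair hne]

variable {G} {t : ℕ} {s u : V}

theorem two_mul_choose_degree_le_replaceVertex (ht : 2 ≤ t) {w : V} (hws : w ≠ s)
    (hwu : w ≠ u) :
    2 * (G.degree w).choose t ≤ ((G.replaceVertex s u).degree w).choose t +
        ((G.replaceVertex u s).degree w).choose t ∧
      (2 * (G.degree w).choose t = ((G.replaceVertex s u).degree w).choose t +
          ((G.replaceVertex u s).degree w).choose t →
        ((G.replaceVertex s u).degree w).choose t = (G.degree w).choose t ∧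
          (G.Adj s w → ¬G.Adj u w → G.degree w + 2 ≤ t)) := by
  have e₁ := G.degree_replaceVertex_add_ite (s := s) hwu
  have e₂ := G.degree_replaceVertex_add_ite (s := u) hws
  obtain ⟨hle, hcase⟩ := Nat.two_mul_choose_le_choose_add_choose ht
    (d₁ := (G.replaceVertex s u).degree w) (d₂ := (G.replaceVertex u s).degree w)
    (d := G.degree w) (by split_ifs at e₁ e₂ <;> omega) (by split_ifs at e₁ e₂ <;> omega)
    (by split_ifs at e₁ e₂ <;> omega)
  refine ⟨hle, fun heq => ⟨?_, fun hsw huw => hcase heq ?_⟩⟩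
  · by_cases hd : (G.replaceVertex s u).degree w = G.degree w
    · rw [hd]
    · have := hcase heq hd
      rw [Nat.choose_eq_zero_of_lt (by split_ifs at e₁ <;> omega),
        Nat.choose_eq_zero_of_lt (by omega)]
  · rw [adj_comm] at hsw huw
    simp only [hsw, huw, if_true, if_false] at e₁
    omega

theorem two_mul_choose_degree_eq_replaceVertex
    (hsym : ∀ s u, (G.replaceVertex s u).starCount t ≤ G.starCount t) (ht : 2 ≤ t)
    (hne : s ≠ u) (hna : ¬G.Adj s u) :
    ∀ w ∈ ({s, u} : Finset V)ᶜ, 2 * (G.degree w).choose t =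
      ((G.replaceVertex s u).degree w).choose t + ((G.replaceVertex u s).degree w).choose t := by
  have hle : ∀ w ∈ ({s, u} : Finset V)ᶜ, 2 * (G.degree w).choose t ≤
      ((G.replaceVertex s u).degree w).choose t + ((G.replaceVertex u s).degree w).choose t := by
    intro w hw
    obtain ⟨hws, hwu⟩ : w ≠ s ∧ w ≠ u := by simpa using hw
    exact (two_mul_choose_degree_le_replaceVertex ht hws hwu).1
  refine (sum_eq_sum_iff_of_le hle).1 (le_antisymm (sum_le_sum hle) ?_)
  have h₁ := hsym s u
  have h₂ := hsym u s
  rw [starCount_eq_sum_compl_add hne, starCount_eq_sum_compl_add hne,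
    degree_replaceVertex_left_of_not_adj _ hna,
    degree_replaceVertex_right_of_not_adj _ hna] at h₁
  rw [starCount_eq_sum_compl_add hne, starCount_eq_sum_compl_add hne,
    degree_replaceVertex_left_of_not_adj _ fun h => hna h.symm,
    degree_replaceVertex_right_of_not_adj _ fun h => hna h.symm] at h₂
  rw [sum_add_distrib, ← mul_sum]
  omega

theorem degree_add_two_le_of_adj_of_not_adj
    (hsym : ∀ s u, (G.replaceVertex s u).starCount t ≤ G.starCount t) (ht : 2 ≤ t)
    (hne : s ≠ u) (hna : ¬G.Adj s u) {w : V} (hsw : G.Adj s w) (huw : ¬G.Adj u w) :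
    G.degree w + 2 ≤ t := by
  have hws : w ≠ s := (G.ne_of_adj hsw).symm
  have hwu : w ≠ u := by rintro rfl; exact hna hsw
  have hw : w ∈ ({s, u} : Finset V)ᶜ := by simp [hws, hwu]
  exact ((two_mul_choose_degree_le_replaceVertex ht hws hwu).2
    (two_mul_choose_degree_eq_replaceVertex hsym ht hne hna w hw)).2 hsw huw

theorem choose_degree_le_of_not_adj
    (hsym : ∀ s u, (G.replaceVertex s u).starCount t ≤ G.starCount t) (ht : 2 ≤ t)
    (hne : s ≠ u) (hna : ¬G.Adj s u) : (G.degree s).choose t ≤ (G.degree u).choose t := by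
  have hsum : ∑ w ∈ ({s, u} : Finset V)ᶜ, ((G.replaceVertex s u).degree w).choose t =
      ∑ w ∈ ({s, u} : Finset V)ᶜ, (G.degree w).choose t := by
    refine sum_congr rfl fun w hw => ?_
    obtain ⟨hws, hwu⟩ : w ≠ s ∧ w ≠ u := by simpa using hw
    exact ((two_mul_choose_degree_le_replaceVertex ht hws hwu).2
      (two_mul_choose_degree_eq_replaceVertex hsym ht hne hna w hw)).1
  have h := hsym s u
  rw [starCount_eq_sum_compl_add hne, starCount_eq_sum_compl_add hne, hsum,
    degree_replaceVertex_left_of_not_adj _ hna,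
    degree_replaceVertex_right_of_not_adj _ hna] at h
  omega

theorem adj_of_le_degree_of_degree_lt
    (hsym : ∀ s u, (G.replaceVertex s u).starCount t ≤ G.starCount t) (ht : 2 ≤ t) {a b : V}
    (ha : t ≤ G.degree a) (hb : G.degree b < t) : G.Adj a b := by
  by_contra hna
  have hne : a ≠ b := by rintro rfl; omega
  have := choose_degree_le_of_not_adj hsym ht hne hna
  rw [Nat.choose_eq_zero_of_lt hb] at this
  exact (Nat.choose_pos ha).ne' (Nat.le_zero.1 this)

end ReplaceVertex

theorem not_adj_trans_of_starCount_maximal [Fintype V] [DecidableEq V] {r t : ℕ} (ht : 2 ≤ t)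
    (hV : t + 1 ≤ Fintype.card V) {G : SimpleGraph V} [DecidableRel G.Adj]
    (hfree : G.CliqueFree (r + 1))
    (hmax : ∀ (H : SimpleGraph V) [DecidableRel H.Adj], H.CliqueFree (r + 1) →
      H.starCount t ≤ G.starCount t)
    {x y z : V} (hxy : ¬G.Adj x y) (hyz : ¬G.Adj y z) : ¬G.Adj x z := by
  intro hxz
  obtain rfl | hxy' := eq_or_ne x y
  · exact hyz hxz
  obtain rfl | hzy := eq_or_ne z y
  · exact hxy hxz
  have hsym (s u : V) : (G.replaceVertex s u).starCount t ≤ G.starCount t :=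
    hmax _ (hfree.replaceVertex s u)
  have hz := degree_add_two_le_of_adj_of_not_adj hsym ht hxy' hxy hxz hyz
  have hx := degree_add_two_le_of_adj_of_not_adj hsym ht hzy (mt G.adj_symm hyz) hxz.symm
    (mt G.adj_symm hxy)
  set L := univ.filter fun v => G.degree v < t
  have hlow (v : V) : v ∈ L ↔ G.degree v < t := by simp [L]
  have hcross (a : V) (ha : a ∉ L) (b : V) (hb : b ∈ L) : G.Adj a b :=
    adj_of_le_degree_of_degree_lt hsym ht (not_lt.1 ((hlow a).not.1 ha)) ((hlow b).1 hb)
  have hxL : x ∈ L := (hlow x).2 (by omega)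
  have hzL : z ∈ L := (hlow z).2 (by omega)
  have hgain := starCount_add_choose_le_starCount_replaceInducedByStar (fun v => (hlow v).1) hxL
  rw [degree_replaceInducedByStar_self hxL fun v hv => (hcross v hv x hxL).symm] at hgain
  have hle := hmax _ (cliqueFree_replaceInducedByStar hfree hxL hzL hxz
    fun a ha => ⟨hcross a ha x hxL, hcross a ha z hzL⟩)
  have hpos : 0 < (Fintype.card V - 1).choose t := Nat.choose_pos (by omega)
  omega

end SimpleGraph

open SimpleGraph

theorem optimal_graphs_complete_multipartite_general (r t n : ℕ) (ht : 2 ≤ t)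
    (hn : t + 1 ≤ n) (G : SimpleGraph (Fin n)) [DecidableRel G.Adj]
    (hfree : G.CliqueFree (r + 1))
    (hmax : ∀ (H : SimpleGraph (Fin n)) [DecidableRel H.Adj], H.CliqueFree (r + 1) →
      ∑ v, (H.degree v).choose t ≤ ∑ v, (G.degree v).choose t) :
    Equivalence (fun x y : Fin n => ¬ G.Adj x y) :=
  ⟨fun _ => G.irrefl, mt G.adj_symm,
    not_adj_trans_of_starCount_maximal ht (by rwa [Fintype.card_fin]) hfree hmax⟩

/-- A `K_{r+1}`-free graph maximizing the number of stars `S_t` is complete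
multipartite, i.e., non-adjacency is an equivalence relation. -/
theorem optimal_graphs_complete_multipartite (r t n : ℕ) (hr : 1 ≤ r) (ht : 2 ≤ t)
    (hn : t + 1 ≤ n) (G : SimpleGraph (Fin n)) [DecidableRel G.Adj]
    (hfree : G.CliqueFree (r + 1))
    (hmax : ∀ (H : SimpleGraph (Fin n)) [DecidableRel H.Adj], H.CliqueFree (r + 1) →
      ∑ v, (H.degree v).choose t ≤ ∑ v, (G.degree v).choose t) :
    Equivalence (fun x y : Fin n => ¬ G.Adj x y) :=
  optimal_graphs_complete_multipartite_general r t n ht hn G hfree hmax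
end

section
/- Let t ≥ 2 and r ≥ 2 be integers and let g(ρ) = (1−ρ)^{t−1}(1 − (t+1)ρ). Suppose ρ₁, …, ρ_r are real numbers with 0 < ρᵢ < 1 for all i, Σᵢ ρᵢ = 1, and there exists λ ∈ ℝ with g(ρᵢ) = λ for all i. Then either ρᵢ = 1/r for all i, or else λ ≤ 0 and there exist real numbers α, β with α < 2/(t+1) < β, g(α) = λ = g(β), and each ρᵢ equal to α or to β. -/
/-!
On `(-∞, 1]` the function `g` decreases strictly up to `2/(t+1)` and increases strictly after it,
since `g' = t (1-ρ)^(t-2) ((t+1)ρ - 2)`. Hence two distinct points of `(-∞, 1]` with the same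
`g`-value lie on opposite sides of `2/(t+1)`, and no three distinct points share a value. So the
`ρᵢ` take at most two values; if only one, `∑ ρᵢ = 1` forces `ρᵢ = 1/r`, and if two, the larger
one exceeds `2/(t+1) > 1/(t+1)`, where `g ≤ 0`.
-/

/-- `g` is the derivative of `ρ ↦ ρ(1-ρ)^t`. -/
noncomputable def gfun (t : ℕ) (ρ : ℝ) : ℝ := (1 - ρ) ^ (t - 1) * (1 - ((t : ℝ) + 1) * ρ)

open Set

section gfun

variable {t : ℕ}

theorem hasDerivAt_gfun (ht : 2 ≤ t) (x : ℝ) :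
    HasDerivAt (gfun t) ((t : ℝ) * (1 - x) ^ (t - 2) * (((t : ℝ) + 1) * x - 2)) x := by
  have hsub : HasDerivAt (fun y : ℝ => 1 - y) (-1) x := by
    simpa using (hasDerivAt_id x).const_sub 1
  have hlin : HasDerivAt (fun y : ℝ => 1 - ((t : ℝ) + 1) * y) (-((t : ℝ) + 1)) x := by
    simpa using ((hasDerivAt_id x).const_mul ((t : ℝ) + 1)).const_sub 1
  refine ((hsub.pow (t - 1)).mul hlin).congr_deriv ?_
  obtain ⟨s, rfl⟩ : ∃ s, t = s + 2 := ⟨t - 2, by omega⟩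
  simp only [show s + 2 - 1 = s + 1 by omega, Nat.add_sub_cancel, Pi.pow_apply]
  push_cast
  ring

theorem continuous_gfun : Continuous (gfun t) := by
  unfold gfun
  fun_prop

theorem strictAntiOn_gfun (ht : 2 ≤ t) : StrictAntiOn (gfun t) (Iic (2 / ((t : ℝ) + 1))) := by
  refine strictAntiOn_of_deriv_neg (convex_Iic _) continuous_gfun.continuousOn fun x hx => ?_
  rw [interior_Iic, mem_Iio, lt_div_iff₀ (by positivity)] at hx
  have htwo : (2 : ℝ) ≤ t := by exact_mod_cast ht
  rw [(hasDerivAt_gfun ht x).deriv]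
  have hpow : 0 < (1 - x) ^ (t - 2) := pow_pos (by nlinarith) _
  exact mul_neg_of_pos_of_neg (by positivity) (by linarith)

theorem strictMonoOn_gfun (ht : 2 ≤ t) : StrictMonoOn (gfun t) (Icc (2 / ((t : ℝ) + 1)) 1) := by
  refine strictMonoOn_of_deriv_pos (convex_Icc _ _) continuous_gfun.continuousOn fun x hx => ?_
  rw [interior_Icc] at hx
  obtain ⟨hcx, hx1⟩ := hx
  rw [div_lt_iff₀ (by positivity)] at hcx
  rw [(hasDerivAt_gfun ht x).deriv]
  have hpow : 0 < (1 - x) ^ (t - 2) := pow_pos (by linarith) _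
  exact mul_pos (mul_pos (by exact_mod_cast (by omega : 0 < t)) hpow) (by linarith)

theorem gfun_nonpos {x : ℝ} (hx : 1 / ((t : ℝ) + 1) ≤ x) (hx1 : x ≤ 1) : gfun t x ≤ 0 := by
  rw [div_le_iff₀ (by positivity)] at hx
  exact mul_nonpos_of_nonneg_of_nonpos (pow_nonneg (by linarith) _) (by linarith)

theorem lt_two_div_lt_of_gfun_eq (ht : 2 ≤ t) {x y : ℝ} (hxy : x < y) (hy : y ≤ 1)
    (hg : gfun t x = gfun t y) : x < 2 / ((t : ℝ) + 1) ∧ 2 / ((t : ℝ) + 1) < y := by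
  constructor
  · by_contra! hcx
    exact (strictMonoOn_gfun ht ⟨hcx, hxy.le.trans hy⟩ ⟨hcx.trans hxy.le, hy⟩ hxy).ne hg
  · by_contra! hyc
    exact (strictAntiOn_gfun ht (mem_Iic.2 (hxy.le.trans hyc)) hyc hxy).ne' hg

theorem eq_or_eq_of_gfun_eq (ht : 2 ≤ t) {x y z : ℝ} (hxy : x < y) (hy : y ≤ 1) (hz : z ≤ 1)
    (hgxy : gfun t x = gfun t y) (hgz : gfun t z = gfun t x) : z = x ∨ z = y := by
  have hx : x ≤ 1 := hxy.le.trans hy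
  have hsides := lt_two_div_lt_of_gfun_eq ht hxy hy hgxy
  rcases lt_trichotomy z x with hzx | rfl | hxz
  · linarith [(lt_two_div_lt_of_gfun_eq ht hzx hx hgz).2]
  · exact Or.inl rfl
  rcases lt_trichotomy z y with hzy | rfl | hyz
  · linarith [(lt_two_div_lt_of_gfun_eq ht hxz hz hgz.symm).2,
      (lt_two_div_lt_of_gfun_eq ht hzy hy (hgz.trans hgxy)).1]
  · exact Or.inr rfl
  · linarith [(lt_two_div_lt_of_gfun_eq ht hyz hz (hgxy.symm.trans hgz.symm)).1]

end gfun

theorem eq_one_div_card_of_sum_eq_one {ι : Type*} [Fintype ι] {ρ : ι → ℝ}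
    (hsum : ∑ i, ρ i = 1) (hconst : ∀ i j, ρ i = ρ j) (i : ι) :
    ρ i = 1 / (Fintype.card ι : ℝ) := by
  refine eq_one_div_of_mul_eq_one_right ?_
  rw [← hsum, Finset.sum_congr rfl fun j _ => hconst j i]
  simp

theorem interior_critical_points_general (t r : ℕ) (ht : 2 ≤ t)
    (ρ : Fin r → ℝ) (h1 : ∀ i, ρ i < 1)
    (hsum : ∑ i, ρ i = 1) (l : ℝ) (hl : ∀ i, gfun t (ρ i) = l) :
    (∀ i, ρ i = 1 / (r : ℝ)) ∨
      (l ≤ 0 ∧ ∃ α β : ℝ, α < 2 / ((t : ℝ) + 1) ∧ 2 / ((t : ℝ) + 1) < β ∧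
        gfun t α = l ∧ gfun t β = l ∧ ∀ i, ρ i = α ∨ ρ i = β) := by
  by_cases hskew : ∃ a b, ρ a < ρ b
  · obtain ⟨a, b, hab⟩ := hskew
    have hgab : gfun t (ρ a) = gfun t (ρ b) := (hl a).trans (hl b).symm
    obtain ⟨hα, hβ⟩ := lt_two_div_lt_of_gfun_eq ht hab (h1 b).le hgab
    have hβ' : 1 / ((t : ℝ) + 1) ≤ ρ b := by
      refine le_trans ?_ hβ.le
      gcongr
      norm_num
    refine Or.inr ⟨hl b ▸ gfun_nonpos hβ' (h1 b).le, ρ a, ρ b, hα, hβ, hl a, hl b, fun k => ?_⟩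
    exact eq_or_eq_of_gfun_eq ht hab (h1 b).le (h1 k).le hgab ((hl k).trans (hl a).symm)
  · push Not at hskew
    left
    simpa using eq_one_div_card_of_sum_eq_one hsum fun i j => le_antisymm (hskew j i) (hskew i j)

/-- Corollary 3.3: interior critical points are either the Turán solution or a
skew solution. -/
theorem interior_critical_points (t r : ℕ) (ht : 2 ≤ t) (hr : 2 ≤ r)
    (ρ : Fin r → ℝ) (h0 : ∀ i, 0 < ρ i) (h1 : ∀ i, ρ i < 1)
    (hsum : ∑ i, ρ i = 1) (l : ℝ) (hl : ∀ i, gfun t (ρ i) = l) :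
    (∀ i, ρ i = 1 / (r : ℝ)) ∨
      (l ≤ 0 ∧ ∃ α β : ℝ, α < 2 / ((t : ℝ) + 1) ∧ 2 / ((t : ℝ) + 1) < β ∧
        gfun t α = l ∧ gfun t β = l ∧ ∀ i, ρ i = α ∨ ρ i = β) :=
  interior_critical_points_general t r ht ρ h1 hsum l hl
end

section
/- For every legal pair (r,t), g((r+1)/((r−1)(t+1))) ≥ g(3/(t+1)); equivalently, ((t − 2/(r−1))/(t − 2))^{t−1} ≤ r − 1. -/
/-- A pair `(r,t)` is legal. -/
def Legal (r t : ℕ) : Prop :=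
  (9 ≤ r ∧ 3 ≤ t) ∨ (r = 8 ∧ 4 ≤ t) ∨ (r = 7 ∧ 5 ≤ t) ∨ (r = 6 ∧ 37 ≤ t)

/-!
With `s = r - 1`, `n = t - 2` and `c = 2 - 2/s ∈ [0, 2]`, both sides of the inequality between the
values of `g` are negative multiples of `((t - 2)/(t + 1))^(t-1)`, and comparing them amounts to
`(1 + c/n)^(n+1) ≤ s`. For `0 ≤ c ≤ 2` the sequence `(1 + c/n)^(n+1)` is decreasing: the ratio
of consecutive terms is controlled by the second-order Bernoulli inequality. So it suffices to check
the inequality at the least `t` allowed for each `r`; for `r = 6` this is tight, as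
`(1 + 8/175)^36 ≈ 4.9988 < 5` while `(1 + 8/170)^35 ≈ 5.0002 > 5`.
-/

theorem one_add_mul_add_choose_two_mul_sq_le_pow {y : ℝ} (hy : 0 ≤ y) (m : ℕ) :
    1 + m * y + m.choose 2 * y ^ 2 ≤ (1 + y) ^ m := by
  induction m with
  | zero => simp
  | succ m ih =>
    rw [Nat.choose_succ_succ', Nat.choose_one_right, pow_succ (1 + y)]
    push_cast
    have : 0 ≤ (m.choose 2 : ℝ) * y ^ 3 := by positivity
    nlinarith [mul_le_mul_of_nonneg_right ih (by linarith : 0 ≤ 1 + y)]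

theorem one_add_div_succ_pow_le {c : ℝ} (hc0 : 0 ≤ c) (hc2 : c ≤ 2) {n : ℕ} (hn : 0 < n) :
    (1 + c / (n + 1 : ℕ)) ^ (n + 1 + 1) ≤ (1 + c / n) ^ (n + 1) := by
  have hn' : (0 : ℝ) < n := by exact_mod_cast hn
  set y := c / (n * (n + 1 + c)) with hy
  have hsplit : 1 + c / n = (1 + y) * (1 + c / (n + 1 : ℕ)) := by
    rw [hy]; push_cast; field_simp; ring
  -- The first-order Bernoulli bound only suffices for `c ≤ 1 + 1 / n`.
  have hbern : 1 + c / (n + 1 : ℕ) ≤ (1 + y) ^ (n + 1) := by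
    refine le_trans ?_ (one_add_mul_add_choose_two_mul_sq_le_pow (by positivity) (n + 1))
    rw [Nat.cast_choose_two, ← sub_nonneg]
    have hF : 0 ≤ (1 - c / 2) * (n + 1) ^ 2 + 2 * c + n * c * (2 - c) := by
      have : 0 ≤ 1 - c / 2 := by linarith
      have : 0 ≤ 2 - c := by linarith
      positivity
    have e : 1 + ((n + 1 : ℕ) : ℝ) * y + (n + 1 : ℕ) * ((n + 1 : ℕ) - 1) / 2 * y ^ 2
        - (1 + c / (n + 1 : ℕ)) = c * ((1 - c / 2) * (n + 1) ^ 2 + 2 * c + n * c * (2 - c))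
          / ((n + 1) * n * (n + 1 + c) ^ 2) := by
      rw [hy]; push_cast; field_simp; ring
    rw [e]
    exact div_nonneg (mul_nonneg hc0 hF) (by positivity)
  calc (1 + c / (n + 1 : ℕ)) ^ (n + 1 + 1)
      = (1 + c / (n + 1 : ℕ)) * (1 + c / (n + 1 : ℕ)) ^ (n + 1) := by ring
    _ ≤ (1 + y) ^ (n + 1) * (1 + c / (n + 1 : ℕ)) ^ (n + 1) := by gcongr
    _ = (1 + c / n) ^ (n + 1) := by rw [hsplit, mul_pow]

theorem antitoneOn_one_add_div_pow {c : ℝ} (hc0 : 0 ≤ c) (hc2 : c ≤ 2) :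
    AntitoneOn (fun n : ℕ ↦ (1 + c / n) ^ (n + 1)) (Set.Ici 1) :=
  antitoneOn_nat_Ici_of_succ_le fun _ hn ↦ one_add_div_succ_pow_le hc0 hc2 hn

theorem gfun_three_div (t : ℕ) :
    gfun t (3 / ((t : ℝ) + 1)) = -2 * (((t : ℝ) - 2) / (t + 1)) ^ (t - 1) := by
  have : (t : ℝ) + 1 ≠ 0 := by positivity
  rw [gfun]; field_simp; ring

theorem gfun_add_two_div {s : ℝ} (hs : s ≠ 0) (t : ℕ) :
    gfun t ((s + 2) / (s * ((t : ℝ) + 1)))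
      = -(2 / s) * (((t : ℝ) - 2 / s) / (t + 1)) ^ (t - 1) := by
  have : (t : ℝ) + 1 ≠ 0 := by positivity
  rw [gfun]; field_simp; ring

theorem gfun_le_gfun_iff {s : ℝ} (hs : 0 < s) {t : ℕ} (ht : 2 < t) :
    gfun t (3 / ((t : ℝ) + 1)) ≤ gfun t ((s + 2) / (s * ((t : ℝ) + 1))) ↔
      (((t : ℝ) - 2 / s) / ((t : ℝ) - 2)) ^ (t - 1) ≤ s := by
  have ht' : (0 : ℝ) < t - 2 := by
    have : (2 : ℝ) < t := by exact_mod_cast ht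
    linarith
  have hsplit : ((t : ℝ) - 2 / s) / (t + 1)
      = ((t : ℝ) - 2) / (t + 1) * (((t : ℝ) - 2 / s) / ((t : ℝ) - 2)) := by
    field_simp
  have hA : 0 < (((t : ℝ) - 2) / (t + 1)) ^ (t - 1) := by positivity
  rw [gfun_three_div, gfun_add_two_div hs.ne', hsplit, mul_pow, neg_mul, neg_mul, neg_le_neg_iff,
    div_mul_eq_mul_div, div_le_iff₀ hs, mul_assoc, mul_le_mul_iff_right₀ two_pos,
    mul_le_mul_iff_right₀ hA]

theorem sub_div_div_sub_two_pow_le {s : ℝ} (hs : 1 ≤ s) {n₀ t : ℕ} (hn₀ : 1 ≤ n₀)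
    (ht : n₀ + 2 ≤ t) (hbase : (1 + (2 - 2 / s) / n₀) ^ (n₀ + 1) ≤ s) :
    (((t : ℝ) - 2 / s) / ((t : ℝ) - 2)) ^ (t - 1) ≤ s := by
  obtain ⟨n, rfl⟩ : ∃ n, t = n + 2 := ⟨t - 2, by omega⟩
  have hn : (0 : ℝ) < n := by exact_mod_cast (by omega : 0 < n)
  have hc0 : 0 ≤ 2 - 2 / s := sub_nonneg.2 (div_le_self zero_le_two hs)
  have hc2 : 2 - 2 / s ≤ 2 := sub_le_self _ (by positivity)
  have hrewrite : (((n + 2 : ℕ) : ℝ) - 2 / s) / ((n + 2 : ℕ) - 2) = 1 + (2 - 2 / s) / n := by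
    rw [Nat.cast_add, Nat.cast_two, add_sub_cancel_right]
    field_simp
    ring
  rw [hrewrite, show n + 2 - 1 = n + 1 by omega]
  exact (antitoneOn_one_add_div_pow hc0 hc2 hn₀ (show 1 ≤ n by omega) (by omega)).trans hbase

theorem Legal.pow_le {r t : ℕ} (h : Legal r t) :
    (((t : ℝ) - 2 / ((r : ℝ) - 1)) / ((t : ℝ) - 2)) ^ (t - 1) ≤ (r : ℝ) - 1 := by
  rcases h with ⟨hr, ht⟩ | ⟨rfl, ht⟩ | ⟨rfl, ht⟩ | ⟨rfl, ht⟩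
  · have hs : (8 : ℝ) ≤ r - 1 := by
      have : (9 : ℝ) ≤ r := by exact_mod_cast hr
      linarith
    refine sub_div_div_sub_two_pow_le (n₀ := 1) (by linarith) le_rfl ht ?_
    have hu : (0 : ℝ) ≤ r - 1 - 8 := by linarith
    have hrewrite :
        1 + (2 - 2 / ((r : ℝ) - 1)) / (1 : ℕ) = (3 * ((r : ℝ) - 1) - 2) / ((r : ℝ) - 1) := by
      field_simp
      ring
    show (1 + (2 - 2 / ((r : ℝ) - 1)) / (1 : ℕ)) ^ 2 ≤ (r : ℝ) - 1
    rw [hrewrite, div_pow, div_le_iff₀ (by positivity)]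
    nlinarith [pow_nonneg hu 2, pow_nonneg hu 3]
  · exact sub_div_div_sub_two_pow_le (n₀ := 2) (by norm_num) (by norm_num) ht (by norm_num)
  · exact sub_div_div_sub_two_pow_le (n₀ := 3) (by norm_num) (by norm_num) ht (by norm_num)
  · exact sub_div_div_sub_two_pow_le (n₀ := 35) (by norm_num) (by norm_num) ht (by norm_num)

/-- Lemma 3.10: for legal pairs `(r,t)`,
`g((r+1)/((r-1)(t+1))) ≥ g(3/(t+1))`; equivalently
`((t - 2/(r-1))/(t-2))^{t-1} ≤ r - 1`. -/
theorem monotone_lemma (r t : ℕ) (hleg : Legal r t) :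
    gfun t (3 / ((t : ℝ) + 1))
        ≤ gfun t (((r : ℝ) + 1) / (((r : ℝ) - 1) * ((t : ℝ) + 1))) ∧
      (((t : ℝ) - 2 / ((r : ℝ) - 1)) / ((t : ℝ) - 2)) ^ (t - 1) ≤ (r : ℝ) - 1 := by
  have hr : (5 : ℝ) ≤ r - 1 := by
    have : 6 ≤ r := by rcases hleg with ⟨h, _⟩ | ⟨h, _⟩ | ⟨h, _⟩ | ⟨h, _⟩ <;> omega
    have : (6 : ℝ) ≤ r := by exact_mod_cast this
    linarith
  have ht : 2 < t := by rcases hleg with ⟨_, h⟩ | ⟨_, h⟩ | ⟨_, h⟩ | ⟨_, h⟩ <;> omega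
  refine ⟨?_, hleg.pow_le⟩
  rw [show (r : ℝ) + 1 = ((r : ℝ) - 1) + 2 by ring, gfun_le_gfun_iff (by linarith) ht]
  exact hleg.pow_le
end
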